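/- arXiv:1310.7623 — 5 statements merged into one kernel-verified Lean document; each statement's English description precedes it below -/
import Mathlib

section
/- Let p be an odd prime and let G = ℤ_p ⋉ ℤ_p^I be the semidirect product where a fixed topological generator of the first factor acts on the product ℤ_p^I by multiplication by a fixed scalar 1+λ with λ ∈ pℤ_p. Then every finitely generated closed subgroup C of G satisfies [C, C] ⊆ C^p, i.e., G is locally powerful. -/
/-- Topology on a semidirect product, induced from the product topology. -/
instance semidirectTopology {N H : Type*} [Group N] [Group H] [TopologicalSpace N]
    [TopologicalSpace H] (φ : H →* MulAut N) : TopologicalSpace (N ⋊[φ] H) :=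
  TopologicalSpace.induced (fun g => (g.left, g.right)) inferInstance

/-- The group `G = ℤ_p ⋉ ℤ_p^I` with the `ℤ_p`-factor acting through `φ`. -/
abbrev thetaAbelianGroup (p : ℕ) [Fact p.Prime] (I : Type*)
    (φ : Multiplicative ℤ_[p] →* MulAut (Multiplicative (I → ℤ_[p]))) : Type _ :=
  Multiplicative (I → ℤ_[p]) ⋊[φ] Multiplicative ℤ_[p]

/-!
Every `t ∈ ℤ_p` acts on `ℤ_p^I` by a scalar `c ≡ 1 (mod p)`; such an action is continuous, so
`G` is a compact topological group. For `h ∈ C` and `k = (z, 0) ∈ C ∩ ℤ_p^I` the commutator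
`[h, k] = ((c - 1) z, 0)` is a `ℤ_p`-multiple of `k^p = (p z, 0)`, hence lies in the closed
subgroup `P` topologically generated by the `p`-th powers of `C`.

The image of `C` in `ℤ_p` is a closed ideal `s ℤ_p`, so for `g ∈ C` lying over `s` the subgroup
generated by `g` and `C ∩ ℤ_p^I` is dense in `C`. As `C` normalizes the closed subgroup `P`,
for fixed `x` the `y ∈ C` with `[x, y] ∈ P` form a closed subgroup, so it suffices to test `y`
against these generators: first for `x = g`, then, using `[x, g] = [g, x]⁻¹`, for all `x ∈ C`.
-/

open Multiplicative SemidirectProduct Topology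
open scoped commutatorElement

namespace SemidirectProduct

theorem commutatorElement_inl {N H : Type*} [CommGroup N] [Group H] {φ : H →* MulAut N}
    (x : N ⋊[φ] H) (n : N) : ⁅x, (inl n : N ⋊[φ] H)⁆ = inl (φ x.right n * n⁻¹) := by
  ext
  · simp [commutatorElement_def, map_inv, mul_right_comm x.left]
  · simp [commutatorElement_def]

variable {N H : Type*} [Group N] [Group H] [TopologicalSpace N] [TopologicalSpace H]
  {φ : H →* MulAut N}

theorem isInducing_left_right : IsInducing fun g : N ⋊[φ] H => (g.left, g.right) := ⟨rfl⟩

theorem continuous_iff {X : Type*} [TopologicalSpace X] {f : X → N ⋊[φ] H} :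
    Continuous f ↔ Continuous (fun x => (f x).left) ∧ Continuous (fun x => (f x).right) := by
  rw [isInducing_left_right.continuous_iff, continuous_prodMk]
  rfl

@[fun_prop]
theorem continuous_left : Continuous fun g : N ⋊[φ] H => g.left :=
  (continuous_iff.mp continuous_id).1

@[fun_prop]
theorem continuous_right : Continuous fun g : N ⋊[φ] H => g.right :=
  (continuous_iff.mp continuous_id).2

instance [CompactSpace N] [CompactSpace H] : CompactSpace (N ⋊[φ] H) :=
  ⟨isInducing_left_right.isCompact_iff.mpr <| by
    rw [Set.image_univ_of_surjective fun q => ⟨⟨q.1, q.2⟩, rfl⟩]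
    exact isCompact_univ⟩

theorem isTopologicalGroup [IsTopologicalGroup N] [IsTopologicalGroup H]
    (hφ : Continuous fun q : H × N => φ q.1 q.2) : IsTopologicalGroup (N ⋊[φ] H) where
  continuous_mul := continuous_iff.mpr
    ⟨(continuous_left.comp continuous_fst).mul <| hφ.comp <|
        (continuous_right.comp continuous_fst).prodMk (continuous_left.comp continuous_snd),
      (continuous_right.comp continuous_fst).mul (continuous_right.comp continuous_snd)⟩
  continuous_inv := continuous_iff.mpr
    ⟨hφ.comp (continuous_right.inv.prodMk continuous_left.inv), continuous_right.inv⟩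

end SemidirectProduct

namespace PadicInt

variable {p : ℕ} [Fact p.Prime]

theorem norm_le_inv_pow_iff_dvd (x : ℤ_[p]) (n : ℕ) :
    ‖x‖ ≤ (p : ℝ)⁻¹ ^ n ↔ (p : ℤ_[p]) ^ n ∣ x := by
  rw [inv_pow, ← zpow_natCast, ← zpow_neg, norm_le_pow_iff_mem_span_pow,
    Ideal.mem_span_singleton]

theorem continuous_addChar_of_dvd_sub_one (β : AddChar ℤ_[p] ℤ_[p])
    (hβ : ∀ t, (p : ℤ_[p]) ∣ β t - 1) : Continuous β := by
  have hp : (0 : ℝ) < (p : ℝ)⁻¹ := inv_pos.mpr (mod_cast (Fact.out : p.Prime).pos)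
  have hp1 : (p : ℝ)⁻¹ < 1 := inv_lt_one_of_one_lt₀ (mod_cast (Fact.out : p.Prime).one_lt)
  have hbasis (x : ℤ_[p]) := Metric.nhds_basis_closedBall_pow (x := x) hp hp1
  refine continuous_iff_continuousAt.mpr fun a => ((hbasis a).tendsto_iff (hbasis (β a))).mpr
    fun k _ => ⟨k, trivial, fun t ht => ?_⟩
  rw [Metric.mem_closedBall, dist_eq_norm, norm_le_inv_pow_iff_dvd] at ht ⊢
  obtain ⟨u, hu⟩ := ht
  have hdiff : β t - β a = β a * (β u ^ p ^ k - 1) := by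
    rw [← AddChar.map_nsmul_eq_pow, nsmul_eq_mul, Nat.cast_pow, ← hu, mul_sub,
      ← AddChar.map_add_eq_mul, add_sub_cancel, mul_one]
  have hu_pow : (p : ℤ_[p]) ^ (k + 1) ∣ β u ^ p ^ k - 1 := by
    simpa using dvd_sub_pow_of_dvd_sub (hβ u) k
  rw [hdiff]
  exact ((pow_dvd_pow _ k.le_succ).trans hu_pow).mul_left _

end PadicInt

section TopologicalGroup

variable {G : Type*} [Group G] [TopologicalSpace G] [IsTopologicalGroup G]

theorem conj_mem_topologicalClosure_closure_pow_image {C : Subgroup G} {n : ℕ} {c x : G}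
    (hc : c ∈ C) (hx : x ∈ (Subgroup.closure ((· ^ n) '' (C : Set G))).topologicalClosure) :
    c * x * c⁻¹ ∈ (Subgroup.closure ((· ^ n) '' (C : Set G))).topologicalClosure := by
  have hconj : (Subgroup.closure ((· ^ n) '' (C : Set G))).map (MulAut.conj c).toMonoidHom ≤
      Subgroup.closure ((· ^ n) '' (C : Set G)) := by
    rw [MonoidHom.map_closure]
    refine Subgroup.closure_mono ?_
    rintro _ ⟨_, ⟨y, hy, rfl⟩, rfl⟩
    exact ⟨c * y * c⁻¹, C.mul_mem (C.mul_mem hc hy) (C.inv_mem hc), by simp [conj_pow]⟩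
  exact map_mem_closure (f := fun y => c * y * c⁻¹) (by fun_prop) hx
    fun y hy => hconj ⟨y, hy, rfl⟩

theorem commutatorElement_mem_of_subset_closure {C P : Subgroup G} (hP : IsClosed (P : Set G))
    (hCP : ∀ c ∈ C, ∀ y ∈ P, c * y * c⁻¹ ∈ P) {S : Set G} (hSC : S ⊆ C)
    (hC : (C : Set G) ⊆ closure (Subgroup.closure S)) {x : G} (hxS : ∀ s ∈ S, ⁅x, s⁆ ∈ P)
    {y : G} (hy : y ∈ C) : ⁅x, y⁆ ∈ P := by
  let T : Subgroup G :=
    { carrier := {y | y ∈ C ∧ ⁅x, y⁆ ∈ P}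
      one_mem' := ⟨C.one_mem, by simp [P.one_mem]⟩
      mul_mem' := fun {a b} ⟨haC, ha⟩ ⟨hbC, hb⟩ => ⟨C.mul_mem haC hbC, by
        rw [show ⁅x, a * b⁆ = ⁅x, a⁆ * (a * ⁅x, b⁆ * a⁻¹) by
          simp only [commutatorElement_def]; group]
        exact P.mul_mem ha (hCP a haC _ hb)⟩
      inv_mem' := fun {a} ⟨haC, ha⟩ => ⟨C.inv_mem haC, by
        rw [show ⁅x, a⁻¹⁆ = a⁻¹ * ⁅x, a⁆⁻¹ * a⁻¹⁻¹ by simp only [commutatorElement_def]; group]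
        exact hCP _ (C.inv_mem haC) _ (P.inv_mem ha)⟩ }
  have hST : Subgroup.closure S ≤ T := (Subgroup.closure_le T).mpr fun s hs => ⟨hSC hs, hxS s hs⟩
  have hclosed : IsClosed {y | ⁅x, y⁆ ∈ P} :=
    hP.preimage (f := fun y => ⁅x, y⁆) (by simp only [commutatorElement_def]; fun_prop)
  exact closure_minimal (fun z hz => (hST hz).2) hclosed (hC hy)

end TopologicalGroup

section PadicImage

variable {p : ℕ} [Fact p.Prime] {G : Type*} [Group G] [TopologicalSpace G] [CompactSpace G]
  {f : G →* Multiplicative ℤ_[p]}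

theorem mul_mem_image_toAdd (hf : Continuous f) {C : Subgroup G} (hC : IsClosed (C : Set G))
    {a : ℤ_[p]} (ha : a ∈ (fun x => toAdd (f x)) '' C) (r : ℤ_[p]) :
    r * a ∈ (fun x => toAdd (f x)) '' C := by
  obtain ⟨x, hx, rfl⟩ := ha
  have hclosed : IsClosed ((fun x => toAdd (f x)) '' (C : Set G)) :=
    (hC.isCompact.image (continuous_toAdd.comp hf)).isClosed
  exact PadicInt.denseRange_intCast.induction_on (p := fun r => r * toAdd (f x) ∈ _) r
    (hclosed.preimage (by fun_prop)) fun n => ⟨x ^ n, C.zpow_mem hx n, by simp [zsmul_eq_mul]⟩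

theorem exists_mem_forall_toAdd_eq_mul (hf : Continuous f) {C : Subgroup G}
    (hC : IsClosed (C : Set G)) : ∃ g ∈ C, ∀ h ∈ C, ∃ r : ℤ_[p], toAdd (f h) = r * toAdd (f g) := by
  let A : Ideal ℤ_[p] :=
    { carrier := (fun x => toAdd (f x)) '' C
      add_mem' := by
        rintro _ _ ⟨x, hx, rfl⟩ ⟨y, hy, rfl⟩
        exact ⟨x * y, C.mul_mem hx hy, by simp⟩
      zero_mem' := ⟨1, C.one_mem, by simp⟩
      smul_mem' := fun r _ ha => mul_mem_image_toAdd hf hC ha r }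
  obtain ⟨g, hg, hgA⟩ : Submodule.IsPrincipal.generator A ∈ A :=
    Submodule.IsPrincipal.generator_mem A
  refine ⟨g, hg, fun h hh => ?_⟩
  obtain ⟨r, hr⟩ := (Submodule.IsPrincipal.mem_iff_eq_smul_generator A).mp ⟨h, hh, rfl⟩
  exact ⟨r, hr.trans (by rw [← hgA]; rfl)⟩

theorem subset_closure_closure_insert_inf_ker [IsTopologicalGroup G] (hf : Continuous f)
    {C : Subgroup G} (hC : IsClosed (C : Set G)) {g : G} (hg : g ∈ C)
    (hgen : ∀ h ∈ C, ∃ r : ℤ_[p], toAdd (f h) = r * toAdd (f g)) :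
    (C : Set G) ⊆ closure (Subgroup.closure (insert g ((C ⊓ f.ker : Subgroup G) : Set G))) := by
  set D := (Subgroup.closure (insert g ((C ⊓ f.ker : Subgroup G) : Set G))).topologicalClosure
  have hKD : C ⊓ f.ker ≤ D := fun k hk =>
    Subgroup.le_topologicalClosure _ (Subgroup.subset_closure (Set.mem_insert_of_mem _ hk))
  have hgD : g ∈ D :=
    Subgroup.le_topologicalClosure _ (Subgroup.subset_closure (Set.mem_insert _ _))
  have hDC : D ≤ C := Subgroup.topologicalClosure_minimal _
    ((Subgroup.closure_le C).mpr (Set.insert_subset hg inf_le_left)) hC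
  intro h hh
  change h ∈ D
  obtain ⟨r, hr⟩ := hgen h hh
  obtain ⟨d, hd, hfd⟩ :=
    mul_mem_image_toAdd hf (Subgroup.isClosed_topologicalClosure _) ⟨g, hgD, rfl⟩ r
  have hker : h * d⁻¹ ∈ C ⊓ f.ker := ⟨C.mul_mem hh (C.inv_mem (hDC hd)), by
    change _ ∈ f.ker
    rw [MonoidHom.mem_ker, map_mul, map_inv, mul_inv_eq_one]
    exact toAdd.injective (hr.trans hfd.symm)⟩
  simpa using D.mul_mem (hKD hker) hd

end PadicImage

section ThetaAbelian

variable {p : ℕ} [Fact p.Prime] {I : Type*}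
  {φ : Multiplicative ℤ_[p] →* MulAut (Multiplicative (I → ℤ_[p]))}

theorem inl_ofAdd_smul_mem {P : Subgroup (thetaAbelianGroup p I φ)}
    (hP : IsClosed (P : Set (thetaAbelianGroup p I φ))) {w : I → ℤ_[p]}
    (hw : inl (ofAdd w) ∈ P) (r : ℤ_[p]) : inl (ofAdd (r • w)) ∈ P := by
  have hcont : Continuous fun r : ℤ_[p] => (inl (ofAdd (r • w)) : thetaAbelianGroup p I φ) :=
    continuous_iff.mpr ⟨continuous_ofAdd.comp (continuous_id.smul continuous_const),
      continuous_const⟩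
  exact PadicInt.denseRange_intCast.induction_on (p := fun r => inl (ofAdd (r • w)) ∈ P) r
    (hP.preimage hcont) fun n => by
      rw [Int.cast_smul_eq_zsmul, ofAdd_zsmul, map_zpow]
      exact P.zpow_mem hw n

variable (hφ : ∀ t, ∃ c : ℤ_[p], (p : ℤ_[p]) ∣ c - 1 ∧ ∀ z, φ t z = ofAdd (c • toAdd z))
include hφ

theorem continuous_action_of_scalar :
    Continuous fun q : Multiplicative ℤ_[p] × Multiplicative (I → ℤ_[p]) => φ q.1 q.2 := by
  have hscalar (t z) (i : I) : toAdd (φ t z) i = toAdd (φ t (ofAdd 1)) i * toAdd z i := by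
    obtain ⟨c, -, hc⟩ := hφ t
    simp [hc]
  refine continuous_ofAdd.comp (continuous_pi fun i => ?_)
  let β : AddChar ℤ_[p] ℤ_[p] :=
    { toFun t := toAdd (φ (ofAdd t) (ofAdd 1)) i
      map_zero_eq_one' := by simp
      map_add_eq_mul' a b := by rw [ofAdd_add, map_mul, MulAut.mul_apply, hscalar (ofAdd a)] }
  have hβ (t : ℤ_[p]) : (p : ℤ_[p]) ∣ β t - 1 := by
    obtain ⟨c, hc1, hc⟩ := hφ (ofAdd t)
    simpa [β, hc] using hc1
  change Continuous fun q : Multiplicative ℤ_[p] × Multiplicative (I → ℤ_[p]) =>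
    toAdd (φ q.1 q.2) i
  exact (((PadicInt.continuous_addChar_of_dvd_sub_one β hβ).comp (by fun_prop)).mul
    (by fun_prop)).congr fun q => (hscalar q.1 q.2 i).symm

theorem commutatorElement_inl_mem {P : Subgroup (thetaAbelianGroup p I φ)}
    (hP : IsClosed (P : Set (thetaAbelianGroup p I φ))) (h : thetaAbelianGroup p I φ)
    {z : Multiplicative (I → ℤ_[p])} (hz : inl z ^ p ∈ P) : ⁅h, inl z⁆ ∈ P := by
  obtain ⟨c, ⟨u, hu⟩, hc⟩ := hφ h.right
  rw [← map_pow, ← ofAdd_toAdd z, ← ofAdd_nsmul, ← Nat.cast_smul_eq_nsmul ℤ_[p]] at hz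
  convert inl_ofAdd_smul_mem hP hz u using 1
  rw [commutatorElement_inl, hc, smul_smul, mul_comm u, ← hu, sub_smul, one_smul, ofAdd_sub,
    div_eq_mul_inv]
  rfl

theorem commutator_subset_closure_closure_pow_image
    [IsTopologicalGroup (thetaAbelianGroup p I φ)] {C : Subgroup (thetaAbelianGroup p I φ)}
    (hC : IsClosed (C : Set (thetaAbelianGroup p I φ))) :
    ((⁅C, C⁆ : Subgroup (thetaAbelianGroup p I φ)) : Set (thetaAbelianGroup p I φ)) ⊆
      closure (Subgroup.closure ((· ^ p) '' (C : Set (thetaAbelianGroup p I φ))) :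
        Set (thetaAbelianGroup p I φ)) := by
  set P := (Subgroup.closure ((· ^ p) '' (C : Set (thetaAbelianGroup p I φ)))).topologicalClosure
  have hP : IsClosed (P : Set (thetaAbelianGroup p I φ)) := Subgroup.isClosed_topologicalClosure _
  have hCP (c) (hc : c ∈ C) (y) (hy : y ∈ P) : c * y * c⁻¹ ∈ P :=
    conj_mem_topologicalClosure_closure_pow_image hc hy
  have hright : Continuous (rightHom : thetaAbelianGroup p I φ →* Multiplicative ℤ_[p]) :=
    continuous_right
  obtain ⟨g, hg, hgen⟩ := exists_mem_forall_toAdd_eq_mul hright hC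
  have hdense := subset_closure_closure_insert_inf_ker hright hC hg hgen
  have hSC := Set.insert_subset hg (inf_le_left : C ⊓ rightHom.ker ≤ C)
  have hker (x k : thetaAbelianGroup p I φ) (hk : k ∈ C ⊓ rightHom.ker) : ⁅x, k⁆ ∈ P := by
    obtain ⟨z, rfl⟩ := range_inl_eq_ker_rightHom.ge hk.2
    exact commutatorElement_inl_mem hφ hP x
      (Subgroup.le_topologicalClosure _ (Subgroup.subset_closure ⟨_, hk.1, rfl⟩))
  have hg_comm (y) (hy : y ∈ C) : ⁅g, y⁆ ∈ P := by
    refine commutatorElement_mem_of_subset_closure hP hCP hSC hdense ?_ hy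
    rintro s (rfl | hs)
    · simp [P.one_mem]
    · exact hker g s hs
  have hcomm (x) (hx : x ∈ C) (y) (hy : y ∈ C) : ⁅x, y⁆ ∈ P := by
    refine commutatorElement_mem_of_subset_closure hP hCP hSC hdense ?_ hy
    rintro s (rfl | hs)
    · rw [← commutatorElement_inv]
      exact P.inv_mem (hg_comm x hx)
    · exact hker x s hs
  exact Subgroup.commutator_le.mpr hcomm

end ThetaAbelian

theorem stmt4_general (p : ℕ) [Fact p.Prime] (I : Type*)
    (lam : ℤ_[p]) (hlam : ∃ μ : ℤ_[p], lam = p * μ)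
    (φ : Multiplicative ℤ_[p] →* MulAut (Multiplicative (I → ℤ_[p])))
    (hφ : ∀ t : ℤ_[p], ∃ m : ℤ_[p], ∀ z, φ (Multiplicative.ofAdd t) z =
        Multiplicative.ofAdd ((1 + lam * m) • Multiplicative.toAdd z)) :
    ∀ C : Subgroup (thetaAbelianGroup p I φ),
      IsClosed (C : Set (thetaAbelianGroup p I φ)) →
      (∃ S : Finset (thetaAbelianGroup p I φ),
        ↑S ⊆ (C : Set (thetaAbelianGroup p I φ)) ∧
          closure ((Subgroup.closure (S : Set (thetaAbelianGroup p I φ)) :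
              Subgroup (thetaAbelianGroup p I φ)) : Set (thetaAbelianGroup p I φ)) =
            (C : Set (thetaAbelianGroup p I φ))) →
      ((⁅C, C⁆ : Subgroup (thetaAbelianGroup p I φ)) : Set (thetaAbelianGroup p I φ)) ⊆
        closure ((Subgroup.closure
            ((fun x => x ^ p) '' (C : Set (thetaAbelianGroup p I φ))) :
              Subgroup (thetaAbelianGroup p I φ)) : Set (thetaAbelianGroup p I φ)) := by
  obtain ⟨μ, rfl⟩ := hlam
  have hscalar (t : Multiplicative ℤ_[p]) : ∃ c : ℤ_[p], (p : ℤ_[p]) ∣ c - 1 ∧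
      ∀ z, φ t z = Multiplicative.ofAdd (c • Multiplicative.toAdd z) := by
    obtain ⟨m, hm⟩ := hφ (Multiplicative.toAdd t)
    exact ⟨1 + p * μ * m, ⟨μ * m, by ring⟩, hm⟩
  have := SemidirectProduct.isTopologicalGroup (continuous_action_of_scalar hscalar)
  intro C hC _
  exact commutator_subset_closure_closure_pow_image hscalar hC

/-- Let `p` be an odd prime and `G = ℤ_p ⋉ ℤ_p^I` the semidirect product in which a
fixed topological generator of the `ℤ_p`-factor acts on `ℤ_p^I` by multiplication by
`1 + λ`, `λ ∈ pℤ_p` (so each element acts by a scalar in `1 + λℤ_p`).  Then every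
finitely generated closed subgroup `C` of `G` satisfies `[C, C] ⊆ C^p` (the closed
subgroup generated by `p`-th powers), i.e. `G` is locally powerful. -/
theorem stmt4 (p : ℕ) [Fact p.Prime] (hodd : Odd p) (I : Type*)
    (lam : ℤ_[p]) (hlam : ∃ μ : ℤ_[p], lam = p * μ)
    (φ : Multiplicative ℤ_[p] →* MulAut (Multiplicative (I → ℤ_[p])))
    (hφ1 : ∀ z, φ (Multiplicative.ofAdd 1) z =
        Multiplicative.ofAdd ((1 + lam) • Multiplicative.toAdd z))
    (hφ : ∀ t : ℤ_[p], ∃ m : ℤ_[p], ∀ z, φ (Multiplicative.ofAdd t) z =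
        Multiplicative.ofAdd ((1 + lam * m) • Multiplicative.toAdd z)) :
    ∀ C : Subgroup (thetaAbelianGroup p I φ),
      IsClosed (C : Set (thetaAbelianGroup p I φ)) →
      (∃ S : Finset (thetaAbelianGroup p I φ),
        ↑S ⊆ (C : Set (thetaAbelianGroup p I φ)) ∧
          closure ((Subgroup.closure (S : Set (thetaAbelianGroup p I φ)) :
              Subgroup (thetaAbelianGroup p I φ)) : Set (thetaAbelianGroup p I φ)) =
            (C : Set (thetaAbelianGroup p I φ))) →
      ((⁅C, C⁆ : Subgroup (thetaAbelianGroup p I φ)) : Set (thetaAbelianGroup p I φ)) ⊆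
        closure ((Subgroup.closure
            ((fun x => x ^ p) '' (C : Set (thetaAbelianGroup p I φ))) :
              Subgroup (thetaAbelianGroup p I φ)) : Set (thetaAbelianGroup p I φ)) :=
  stmt4_general p I lam hlam φ hφ
end

section
/- Let p be a prime and F a field of characteristic ≠ p containing a primitive p-th root of unity. Let a, b ∈ F^× have ℤ/p-linearly independent classes in F^×/(F^×)^p, let E = F(a^{1/p}, b^{1/p}) and L = F((F^×)^{1/p}) (the compositum of all F(c^{1/p}), c ∈ F^×). Then for γ ∈ E^×: γ ∈ (L^×)^p if and only if γ ∈ F^×·(E^×)^p. -/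
/-!
Write `L` as the union of the fields `F(ρ₁, …, ρₙ)` generated by finitely many `p`-th roots of
elements of `F^×`, and adjoin the `ρᵢ` to `E` one at a time. At each step `M ⊆ M(ρ)` with
`ρ ^ p ∈ F` and `μ_p ⊆ M`, an element `δ ∈ M(ρ)` with `δ ^ p ∈ M` has the form `m * ρ ^ k` with
`m ∈ M`: if `ρ ∉ M`, the `M`-embedding `ρ ↦ ζ ρ` multiplies `δ` by some `ζ ^ k`, and it acts on
the basis `1, ρ, …, ρ ^ (p - 1)` by the distinct scalars `ζ ^ i`. As `ρ ^ (k p) ∈ F^×`, induction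
gives `δ ^ p ∈ F^× (E^×) ^ p`. The converse holds because `F^× ⊆ (L^×) ^ p` and `E ⊆ L`.
-/

open IntermediateField Polynomial

theorem IsPrimitiveRoot.exists_eq_pow_mul_of_pow_eq_pow {R : Type*} [Field R] {ζ : R} {p : ℕ}
    [NeZero p] (hζ : IsPrimitiveRoot ζ p) {x y : R} (hy : y ≠ 0) (h : x ^ p = y ^ p) :
    ∃ k < p, x = ζ ^ k * y := by
  obtain ⟨k, hk, hxy⟩ := hζ.eq_pow_of_pow_eq_one (ξ := x / y)
    (by rw [div_pow, h, div_self (pow_ne_zero p hy)])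
  exact ⟨k, hk, (div_eq_iff hy).mp hxy.symm⟩

theorem Polynomial.eq_monomial_of_comp_C_mul_X_eq {R : Type*} [CommRing R] [IsDomain R]
    {ζ : R} {p k : ℕ} (hζ : IsPrimitiveRoot ζ p) {f : R[X]} (hf : f.natDegree < p)
    (hk : k < p) (h : f.comp (C ζ * X) = C (ζ ^ k) * f) : f = monomial k (f.coeff k) := by
  ext i
  have hi := congrArg (coeff · i) h
  simp only [comp_C_mul_X_coeff, coeff_C_mul] at hi
  rw [coeff_monomial]
  split_ifs with hki
  · rw [hki]
  by_cases hip : i < p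
  · by_contra hfi
    exact hki (hζ.pow_inj hk hip (mul_left_cancel₀ hfi (by rw [hi, mul_comm])).symm)
  · exact coeff_eq_zero_of_natDegree_lt (hf.trans_le (not_lt.mp hip))

section Kummer

variable {K Ω : Type*} [Field K] [Field Ω] [Algebra K Ω] {p : ℕ} {ζ : K} {r : Ω} {c : K}

theorem minpoly_eq_X_pow_sub_C_of_notMem_bot (hp : p.Prime) (hζ : IsPrimitiveRoot ζ p)
    (hr : r ^ p = algebraMap K Ω c) (hrK : r ∉ (⊥ : IntermediateField K Ω)) :
    minpoly K r = X ^ p - C c := by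
  have : NeZero p := ⟨hp.ne_zero⟩
  have hirr : Irreducible (X ^ p - C c) := by
    refine X_pow_sub_C_irreducible_of_prime hp fun m hm => hrK ?_
    rcases eq_or_ne m 0 with rfl | hm0
    · rw [← hm, zero_pow hp.ne_zero, map_zero, pow_eq_zero_iff hp.ne_zero] at hr
      exact hr ▸ zero_mem _
    obtain ⟨k, -, hk⟩ :=
      (hζ.map_of_injective (algebraMap K Ω).injective).exists_eq_pow_mul_of_pow_eq_pow (x := r)
        ((_root_.map_ne_zero _).mpr hm0) (by rw [hr, ← hm, map_pow])
    exact mem_bot.mpr ⟨ζ ^ k * m, by rw [hk, map_mul, map_pow]⟩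
  exact (minpoly.eq_of_irreducible_of_monic hirr (by simp [hr])
    (monic_X_pow_sub_C c hp.ne_zero)).symm

theorem exists_eq_mul_pow_of_mem_adjoin_simple (hp : p.Prime) (hζ : IsPrimitiveRoot ζ p)
    (hr : r ^ p = algebraMap K Ω c) {δ : Ω} (hδ : δ ∈ K⟮r⟯)
    (hδp : δ ^ p ∈ (⊥ : IntermediateField K Ω)) :
    ∃ (m : K) (k : ℕ), δ = algebraMap K Ω m * r ^ k := by
  by_cases hrK : r ∈ (⊥ : IntermediateField K Ω)
  · rw [adjoin_simple_eq_bot_iff.mpr hrK] at hδ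
    obtain ⟨m, rfl⟩ := mem_bot.mp hδ
    exact ⟨m, 0, by rw [pow_zero, mul_one]⟩
  rcases eq_or_ne δ 0 with rfl | hδ0
  · exact ⟨0, 0, by rw [map_zero, zero_mul]⟩
  have : NeZero p := ⟨hp.ne_zero⟩
  have hmin := minpoly_eq_X_pow_sub_C_of_notMem_bot hp hζ hr hrK
  have hint : IsIntegral K r :=
    ⟨_, monic_X_pow_sub_C c hp.ne_zero, by rw [← aeval_def]; simp [hr]⟩
  obtain ⟨f, hfdeg, hf⟩ := (adjoin.powerBasis hint).exists_eq_aeval ⟨δ, hδ⟩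
  rw [adjoin.powerBasis_dim, hmin, natDegree_X_pow_sub_C] at hfdeg
  rw [adjoin.powerBasis_gen] at hf
  have hδf : δ = aeval r f := by simpa using congrArg Subtype.val hf
  let σ : K⟮r⟯ →ₐ[K] Ω := (algHomAdjoinIntegralEquiv K hint).symm
    ⟨algebraMap K Ω ζ * r, by
      simp [hmin, mul_pow, hr, ← map_pow, hζ.pow_eq_one, X_pow_sub_C_ne_zero hp.pos]⟩
  have hσδ : σ ⟨δ, hδ⟩ = aeval r (f.comp (C ζ * X)) := by
    rw [hf, ← aeval_algHom_apply, algHomAdjoinIntegralEquiv_symm_apply_gen, aeval_comp]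
    simp
  have hσδp : σ ⟨δ, hδ⟩ ^ p = δ ^ p := by
    obtain ⟨d, hd⟩ := mem_bot.mp hδp
    rw [← map_pow, show (⟨δ, hδ⟩ : K⟮r⟯) ^ p = algebraMap K K⟮r⟯ d from Subtype.ext hd.symm,
      AlgHom.commutes, hd]
  obtain ⟨k, hk, hσk⟩ :=
    (hζ.map_of_injective (algebraMap K Ω).injective).exists_eq_pow_mul_of_pow_eq_pow hδ0 hσδp
  have hcomp : f.comp (C ζ * X) = C (ζ ^ k) * f := by
    rw [← sub_eq_zero]
    by_contra hne
    have hle := minpoly.degree_le_of_ne_zero K r hne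
      (by rw [map_sub, ← hσδ, hσk, map_mul, aeval_C, map_pow, ← hδf, sub_self])
    rw [hmin, degree_X_pow_sub_C hp.pos, ← not_lt] at hle
    refine hle ((natDegree_lt_iff_degree_lt hne).mp ((natDegree_sub_le _ _).trans_lt ?_))
    rw [natDegree_comp, natDegree_C_mul_X _ (hζ.ne_zero hp.ne_zero), mul_one]
    exact max_lt hfdeg (natDegree_C_mul_le _ _ |>.trans_lt hfdeg)
  refine ⟨f.coeff k, k, ?_⟩
  rw [hδf, eq_monomial_of_comp_C_mul_X_eq hζ hfdeg hk hcomp, aeval_monomial, coeff_monomial_same]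

end Kummer

section Radicals

variable {F Ω : Type*} [Field F] [Field Ω] [Algebra F Ω] {p : ℕ} {ζ : F}

theorem exists_eq_mul_pow_of_mem_sup_adjoin_simple (hp : p.Prime) (hζ : IsPrimitiveRoot ζ p)
    {M : IntermediateField F Ω} {r : Ω} {c : F} (hr : r ^ p = algebraMap F Ω c) {δ : Ω}
    (hδ : δ ∈ M ⊔ F⟮r⟯) (hδp : δ ^ p ∈ M) : ∃ m ∈ M, ∃ k : ℕ, δ = m * r ^ k := by
  rw [← restrictScalars_adjoin_eq_sup, mem_restrictScalars] at hδ
  obtain ⟨m, k, hm⟩ := exists_eq_mul_pow_of_mem_adjoin_simple hp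
    (hζ.map_of_injective (algebraMap F M).injective)
    (by rw [hr, IsScalarTower.algebraMap_apply F M Ω]) hδ (mem_bot.mpr ⟨⟨δ ^ p, hδp⟩, rfl⟩)
  exact ⟨m, m.2, k, hm⟩

theorem exists_pow_eq_mul_pow_of_mem_sup_adjoin_finset (hp : p.Prime)
    (hζ : IsPrimitiveRoot ζ p) (E : IntermediateField F Ω) (T : Finset Ω)
    (hT : ∀ r ∈ T, ∃ c : F, c ≠ 0 ∧ r ^ p = algebraMap F Ω c) {δ : Ω}
    (hδ : δ ∈ E ⊔ adjoin F (T : Set Ω)) (hδp : δ ^ p ∈ E) :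
    ∃ (x : F), ∃ ε ∈ E, δ ^ p = algebraMap F Ω x * ε ^ p := by
  classical
  induction T using Finset.induction_on generalizing δ with
  | empty =>
    rw [Finset.coe_empty, adjoin_empty, sup_bot_eq] at hδ
    exact ⟨1, δ, hδ, by rw [map_one, one_mul]⟩
  | insert r T _ ih =>
    obtain ⟨c, hc, hr⟩ := hT r (Finset.mem_insert_self r T)
    rw [Finset.coe_insert, Set.insert_eq, adjoin_union, sup_comm (adjoin F {r}), ← sup_assoc]
      at hδ
    obtain ⟨m, hm, k, rfl⟩ := exists_eq_mul_pow_of_mem_sup_adjoin_simple hp hζ hr hδ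
      (le_sup_left (a := E) hδp)
    have hδp' : (m * r ^ k) ^ p = algebraMap F Ω (c ^ k) * m ^ p := by
      rw [mul_pow, ← pow_mul, mul_comm k, pow_mul, hr, map_pow, mul_comm]
    have hmp : m ^ p ∈ E := by
      have hck : algebraMap F Ω (c ^ k) ≠ 0 := (_root_.map_ne_zero _).mpr (pow_ne_zero k hc)
      rw [← inv_mul_cancel_left₀ hck (m ^ p), ← hδp', ← map_inv₀]
      exact mul_mem (IntermediateField.algebraMap_mem E _) hδp
    obtain ⟨x, ε, hε, hx⟩ := ih (fun r hr => hT r (Finset.mem_insert_of_mem hr)) hm hmp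
    exact ⟨c ^ k * x, ε, hε, by rw [hδp', hx, map_mul, mul_assoc]⟩

theorem exists_pow_eq_mul_pow_of_mem_adjoin_radicals (hp : p.Prime) (hζ : IsPrimitiveRoot ζ p)
    (E : IntermediateField F Ω) {δ : Ω}
    (hδ : δ ∈ adjoin F {x : Ω | ∃ c : F, c ≠ 0 ∧ x ^ p = algebraMap F Ω c}) (hδp : δ ^ p ∈ E) :
    ∃ (x : F), ∃ ε ∈ E, δ ^ p = algebraMap F Ω x * ε ^ p := by
  obtain ⟨T, hT, hδT⟩ := exists_finset_of_mem_adjoin hδ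
  exact exists_pow_eq_mul_pow_of_mem_sup_adjoin_finset hp hζ E T hT
    (le_sup_right (a := E) hδT) hδp

theorem mem_adjoin_radicals_of_pow_eq {x : Ω} {c : F} (hx : x ^ p = algebraMap F Ω c) :
    x ∈ adjoin F {y : Ω | ∃ c : F, c ≠ 0 ∧ y ^ p = algebraMap F Ω c} := by
  rcases eq_or_ne x 0 with rfl | hx0
  · exact zero_mem _
  refine subset_adjoin F _ ⟨c, ?_, hx⟩
  rintro rfl
  exact pow_ne_zero p hx0 (by rw [hx, map_zero])

end Radicals

theorem stmt8_general (p : ℕ) (hp : p.Prime) {F Ω : Type*} [Field F] [Field Ω] [Algebra F Ω]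
    [IsAlgClosed Ω]
    (ζ : F) (hζ : IsPrimitiveRoot ζ p)
    (a b : F)
    (α β : Ω) (hα : α ^ p = algebraMap F Ω a) (hβ : β ^ p = algebraMap F Ω b)
    (E : IntermediateField F Ω) (hE : E = IntermediateField.adjoin F {α, β})
    (L : IntermediateField F Ω)
    (hL : L = IntermediateField.adjoin F
        {x : Ω | ∃ c : F, c ≠ 0 ∧ x ^ p = algebraMap F Ω c}) :
    ∀ γ : Ω, γ ∈ E → γ ≠ 0 →
      ((∃ δ ∈ L, δ ^ p = γ) ↔
        ∃ (x : F) (ε : Ω), x ≠ 0 ∧ ε ∈ E ∧ ε ≠ 0 ∧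
          γ = algebraMap F Ω x * ε ^ p) := by
  subst hL
  intro γ hγE hγ0
  constructor
  · rintro ⟨δ, hδL, rfl⟩
    obtain ⟨x, ε, hεE, hδ⟩ := exists_pow_eq_mul_pow_of_mem_adjoin_radicals hp hζ E hδL hγE
    refine ⟨x, ε, ?_, hεE, ?_, hδ⟩ <;> rintro rfl <;>
      exact hγ0 (by simpa [hp.ne_zero] using hδ)
  · rintro ⟨x, ε, -, hεE, -, rfl⟩
    obtain ⟨ρ, hρ⟩ := IsAlgClosed.exists_pow_nat_eq (algebraMap F Ω x) hp.pos
    have hEL : E ≤ adjoin F {x : Ω | ∃ c : F, c ≠ 0 ∧ x ^ p = algebraMap F Ω c} := by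
      rw [hE, adjoin_le_iff]
      rintro _ (rfl | rfl)
      exacts [mem_adjoin_radicals_of_pow_eq hα, mem_adjoin_radicals_of_pow_eq hβ]
    exact ⟨ρ * ε, mul_mem (mem_adjoin_radicals_of_pow_eq hρ) (hEL hεE), by rw [mul_pow, hρ]⟩

/-- Let `p` be a prime and `F` a field of characteristic `≠ p` containing a primitive
`p`-th root of unity.  Let `a, b ∈ F^×` have `ℤ/p`-linearly independent classes in
`F^×/(F^×)^p`, let `E = F(a^{1/p}, b^{1/p})` and let `L = F((F^×)^{1/p})` be the
compositum of all `F(c^{1/p})`, `c ∈ F^×`, inside an algebraically closed overfield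
`Ω`.  Then for `γ ∈ E^×`:  `γ ∈ (L^×)^p` if and only if `γ ∈ F^×·(E^×)^p`. -/
theorem stmt8 (p : ℕ) (hp : p.Prime) {F Ω : Type*} [Field F] [Field Ω] [Algebra F Ω]
    [IsAlgClosed Ω]
    (hchar : (p : F) ≠ 0) (ζ : F) (hζ : IsPrimitiveRoot ζ p)
    (a b : F) (ha0 : a ≠ 0) (hb0 : b ≠ 0)
    (hindep : ∀ i j : ℕ, (∃ x : F, x ^ p = a ^ i * b ^ j) → p ∣ i ∧ p ∣ j)
    (α β : Ω) (hα : α ^ p = algebraMap F Ω a) (hβ : β ^ p = algebraMap F Ω b)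
    (E : IntermediateField F Ω) (hE : E = IntermediateField.adjoin F {α, β})
    (L : IntermediateField F Ω)
    (hL : L = IntermediateField.adjoin F
        {x : Ω | ∃ c : F, c ≠ 0 ∧ x ^ p = algebraMap F Ω c}) :
    ∀ γ : Ω, γ ∈ E → γ ≠ 0 →
      ((∃ δ ∈ L, δ ^ p = γ) ↔
        ∃ (x : F) (ε : Ω), x ≠ 0 ∧ ε ∈ E ∧ ε ≠ 0 ∧
          γ = algebraMap F Ω x * ε ^ p) :=
  stmt8_general p hp ζ hζ a b α β hα hβ E hE L hL
end

section
/- Let p be an odd prime and G a pro-p group of the form G = ⟨σ⟩ ⋉ N with ⟨σ⟩ ≅ ℤ_p, N ≅ ℤ_p^I abelian, and σ h σ^{-1} = h^{1+p^k} for all h ∈ N, where k ≥ 1. Then [G, G] = N^{p^k} and γ_i(G) = N^{p^{k(i-1)}} for all i ≥ 2, where γ_i denotes the lower central series. -/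
/-!
If every `g : G` acts on the abelian group `N` by `z ↦ z * ψ_g(z)^q` with `ψ_g` an endomorphism,
then in `N ⋊ G` one computes `⁅(x, g), (y, h)⁆ = (ψ_g(y) / ψ_h(x))^q`, so commutators lie in
`N^q`, and the commutator of an element of `N^(q^j)` with anything lies in `N^(q^(j+1))`.
Conversely, if some `σ` acts by `z ↦ z^(q+1)`, then `⁅x, σ⁆ = x^(-q)`, so `N^(q^j) ⊆ γ_{j+1}`.
Hence `γ_{j+1}(N ⋊ G) = N^(q^j)` for `j ≥ 1`. For `N = ℤ_p^I`, where `g` acts by a scalar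
`1 + p^k m_g`, take `q = p^k` and `ψ_g` the multiplication by `m_g`.
-/

open scoped commutatorElement

namespace SemidirectProduct

section

variable {N G : Type*} [Group N] [CommGroup G] {φ : G →* MulAut N}

theorem commutatorElement_eq_inl (a b : N ⋊[φ] G) :
    ⁅a, b⁆ = inl (a.left * φ a.right b.left * (φ b.right a.left)⁻¹ * b.left⁻¹) := by
  ext
  · simp only [commutatorElement_def, mul_left, inv_left, mul_right, inv_right, left_inl,
      mul_inv_cancel_comm, ← MulAut.mul_apply, mul_inv_cancel, MulAut.one_apply, map_inv]
    rw [← map_inv φ, ← map_mul, mul_inv_cancel_comm]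
  · simp [commutatorElement_def]

end

section

variable {N G : Type*} [CommGroup N] [CommGroup G] {φ : G →* MulAut N} {q : ℕ}

theorem commutatorElement_eq_inl_pow {ψ : G → N →* N} (hψ : ∀ g z, φ g z = z * ψ g z ^ q)
    (a b : N ⋊[φ] G) :
    ⁅a, b⁆ = inl ((ψ a.right b.left * (ψ b.right a.left)⁻¹) ^ q) := by
  rw [commutatorElement_eq_inl, hψ, hψ, mul_pow, inv_pow]
  congr 1
  apply Additive.ofMul.injective
  simp only [ofMul_mul, ofMul_inv]
  abel

theorem inl_pow_mem_commutator_top {σ : G} (hσ : ∀ z, φ σ z = z ^ (q + 1))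
    {H : Subgroup (N ⋊[φ] G)} {x : N} (hx : inl x ∈ H) :
    inl (x ^ q) ∈ ⁅H, (⊤ : Subgroup (N ⋊[φ] G))⁆ := by
  have hcomm : ⁅(inl x : N ⋊[φ] G), inr σ⁆ = (inl (x ^ q) : N ⋊[φ] G)⁻¹ := by
    rw [commutatorElement_eq_inl, ← map_inv]
    simp [hσ, pow_succ]
  simpa [hcomm] using Subgroup.commutator_mem_commutator hx (Subgroup.mem_top (inr σ))

theorem commutatorElement_inl_pow_pow {ψ : G → N →* N} (hψ : ∀ g z, φ g z = z * ψ g z ^ q)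
    (w : N) (j : ℕ) (b : N ⋊[φ] G) :
    ⁅(inl (w ^ q ^ j) : N ⋊[φ] G), b⁆ = inl ((ψ b.right w)⁻¹ ^ q ^ (j + 1)) := by
  have hψ_one : ψ 1 b.left ^ q = 1 := by
    simpa using (hψ 1 b.left).symm
  rw [commutatorElement_eq_inl_pow hψ, right_inl, left_inl, mul_pow, hψ_one, one_mul,
    map_pow (ψ b.right), ← inv_pow, ← pow_mul, ← pow_succ]

theorem lowerCentralSeries_succ_le_map_inl_range_pow {ψ : G → N →* N}
    (hψ : ∀ g z, φ g z = z * ψ g z ^ q) (j : ℕ) :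
    (⊤ : Subgroup (N ⋊[φ] G)).lowerCentralSeries (j + 1) ≤
      (powMonoidHom (q ^ (j + 1)) : N →* N).range.map inl := by
  induction j with
  | zero =>
    rw [zero_add, pow_one]
    exact Subgroup.commutator_le.2 fun a _ b _ =>
      ⟨_, ⟨_, rfl⟩, (commutatorElement_eq_inl_pow hψ a b).symm⟩
  | succ j ih =>
    refine (Subgroup.commutator_mono ih le_rfl).trans (Subgroup.commutator_le.2 ?_)
    rintro _ ⟨_, ⟨w, rfl⟩, rfl⟩ b -
    exact ⟨_, ⟨_, rfl⟩, (commutatorElement_inl_pow_pow hψ w (j + 1) b).symm⟩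

theorem inl_pow_pow_mem_lowerCentralSeries {σ : G} (hσ : ∀ z, φ σ z = z ^ (q + 1)) (w : N)
    (j : ℕ) : inl (w ^ q ^ j) ∈ (⊤ : Subgroup (N ⋊[φ] G)).lowerCentralSeries j := by
  induction j with
  | zero => exact Subgroup.mem_top _
  | succ j ih =>
    rw [pow_succ, pow_mul]
    exact inl_pow_mem_commutator_top hσ ih

theorem lowerCentralSeries_succ_eq_map_inl_range_pow {ψ : G → N →* N}
    (hψ : ∀ g z, φ g z = z * ψ g z ^ q) {σ : G} (hσ : ∀ z, φ σ z = z ^ (q + 1)) (j : ℕ) :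
    (⊤ : Subgroup (N ⋊[φ] G)).lowerCentralSeries (j + 1) =
      (powMonoidHom (q ^ (j + 1)) : N →* N).range.map inl := by
  refine le_antisymm (lowerCentralSeries_succ_le_map_inl_range_pow hψ j) ?_
  rw [Subgroup.map_le_iff_le_comap]
  rintro _ ⟨w, rfl⟩
  exact inl_pow_pow_mem_lowerCentralSeries hσ w (j + 1)

end

end SemidirectProduct

theorem Subgroup.closure_image_pow_univ {M : Type*} [CommGroup M] (n : ℕ) :
    Subgroup.closure ((fun z : M => z ^ n) '' Set.univ) = (powMonoidHom n : M →* M).range := by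
  rw [Set.image_univ]
  exact Subgroup.closure_eq (powMonoidHom n : M →* M).range

theorem ofAdd_one_add_natCast_mul_smul {R M : Type*} [CommSemiring R] [AddCommMonoid M]
    [Module R M] (n : ℕ) (r : R) (z : Multiplicative M) :
    Multiplicative.ofAdd ((1 + (n : R) * r) • Multiplicative.toAdd z) =
      z * Multiplicative.ofAdd (r • Multiplicative.toAdd z) ^ n := by
  apply Multiplicative.toAdd.injective
  simp only [toAdd_ofAdd, toAdd_mul, toAdd_pow, add_smul, one_smul, mul_smul,
    Nat.cast_smul_eq_nsmul]

theorem stmt11_general (p k : ℕ) [Fact p.Prime] (I : Type*)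
    (φ : Multiplicative ℤ_[p] →* MulAut (Multiplicative (I → ℤ_[p])))
    (hφ1 : ∀ z, φ (Multiplicative.ofAdd 1) z =
        Multiplicative.ofAdd ((1 + (p : ℤ_[p]) ^ k) • Multiplicative.toAdd z))
    (hφ : ∀ t : ℤ_[p], ∃ m : ℤ_[p], ∀ z, φ (Multiplicative.ofAdd t) z =
        Multiplicative.ofAdd ((1 + (p : ℤ_[p]) ^ k * m) • Multiplicative.toAdd z)) :
    commutator (Multiplicative (I → ℤ_[p]) ⋊[φ] Multiplicative ℤ_[p]) =
      Subgroup.map SemidirectProduct.inl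
        (Subgroup.closure
          ((fun z : Multiplicative (I → ℤ_[p]) => z ^ p ^ k) '' Set.univ)) ∧
    ∀ i : ℕ, 2 ≤ i →
      (⊤ : Subgroup (Multiplicative (I → ℤ_[p]) ⋊[φ] Multiplicative ℤ_[p])).lowerCentralSeries (i - 1) =
        Subgroup.map SemidirectProduct.inl
          (Subgroup.closure
            ((fun z : Multiplicative (I → ℤ_[p]) => z ^ p ^ (k * (i - 1))) '' Set.univ)) := by
  choose m hm using hφ
  have hψ : ∀ g z, φ g z =
      z * (DistribSMul.toAddMonoidHom (I → ℤ_[p]) (m g.toAdd)).toMultiplicative z ^ p ^ k := by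
    intro g z
    rw [← ofAdd_toAdd g, hm, ← Nat.cast_pow, ofAdd_one_add_natCast_mul_smul]
    rfl
  have hσ : ∀ z, φ (Multiplicative.ofAdd 1) z = z ^ (p ^ k + 1) := by
    intro z
    rw [hφ1, ← mul_one ((p : ℤ_[p]) ^ k), ← Nat.cast_pow, ofAdd_one_add_natCast_mul_smul, one_smul,
      ofAdd_toAdd, pow_succ']
  have hγ := SemidirectProduct.lowerCentralSeries_succ_eq_map_inl_range_pow hψ hσ
  refine ⟨?_, fun i hi => ?_⟩
  · rw [Subgroup.closure_image_pow_univ, ← Subgroup.top_lowerCentralSeries_one, hγ 0, pow_one]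
  · obtain ⟨j, rfl⟩ : ∃ j, i = j + 2 := ⟨i - 2, by omega⟩
    rw [Subgroup.closure_image_pow_univ, Nat.add_succ_sub_one, hγ, pow_mul]

/-- Let `p` be an odd prime, `k ≥ 1`, and `G = ⟨σ⟩ ⋉ N` with `⟨σ⟩ ≅ ℤ_p`,
`N ≅ ℤ_p^I` abelian, and `σ h σ⁻¹ = h^{1+p^k}` for `h ∈ N` (each element of the
`ℤ_p`-factor acting by a scalar in `1 + p^k ℤ_p`).  Then `[G, G] = N^{p^k}` and
`γ_i(G) = N^{p^{k(i-1)}}` for all `i ≥ 2`. -/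
theorem stmt11 (p k : ℕ) [Fact p.Prime] (hodd : Odd p) (hk : 1 ≤ k) (I : Type*)
    (φ : Multiplicative ℤ_[p] →* MulAut (Multiplicative (I → ℤ_[p])))
    (hφ1 : ∀ z, φ (Multiplicative.ofAdd 1) z =
        Multiplicative.ofAdd ((1 + (p : ℤ_[p]) ^ k) • Multiplicative.toAdd z))
    (hφ : ∀ t : ℤ_[p], ∃ m : ℤ_[p], ∀ z, φ (Multiplicative.ofAdd t) z =
        Multiplicative.ofAdd ((1 + (p : ℤ_[p]) ^ k * m) • Multiplicative.toAdd z)) :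
    commutator (Multiplicative (I → ℤ_[p]) ⋊[φ] Multiplicative ℤ_[p]) =
      Subgroup.map SemidirectProduct.inl
        (Subgroup.closure
          ((fun z : Multiplicative (I → ℤ_[p]) => z ^ p ^ k) '' Set.univ)) ∧
    ∀ i : ℕ, 2 ≤ i →
      (⊤ : Subgroup (Multiplicative (I → ℤ_[p]) ⋊[φ] Multiplicative ℤ_[p])).lowerCentralSeries (i - 1) =
        Subgroup.map SemidirectProduct.inl
          (Subgroup.closure
            ((fun z : Multiplicative (I → ℤ_[p]) => z ^ p ^ (k * (i - 1))) '' Set.univ)) :=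
  stmt11_general p k I φ hφ1 hφ
end

section
/- Let p be an odd prime, k ≥ 1, and G = ⟨σ⟩ ⋉ N with ⟨σ⟩ ≅ ℤ_p, N ≅ ℤ_p^I, and σ acting on N by the scalar 1+p^k. Then for every n with p^{ℓ-1} < n ≤ p^ℓ, the n-th dimension subgroup satisfies D_n(G) = G^{p^ℓ}; consequently D_n(G)/D_{n+1}(G) ≅ (ℤ/pℤ)^{I ∪ {*}} if n is a power of p and D_n(G) = D_{n+1}(G) otherwise. -/
/-- The dimension subgroups of a group `G` (relative to the prime `p`):
`D_1(G) = G` and `D_n(G) = D_{⌈n/p⌉}(G)^p · ∏_{i+j=n} [D_i(G), D_j(G)]`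
(for `p ≥ 2` one has `⌈n/p⌉ = (n + p - 1)/p ≤ n - 1` when `n ≥ 2`, which is
recorded by a `min` to make the recursion decreasing). -/
def dimensionSubgroup (p : ℕ) (G : Type*) [Group G] : ℕ → Subgroup G
  | 0 => ⊤
  | 1 => ⊤
  | n + 2 =>
      Subgroup.closure ((fun x => x ^ p) ''
        (dimensionSubgroup p G (min ((n + 2 + p - 1) / p) (n + 1)) : Set G)) ⊔
      ⨆ i : Fin (n + 1),
        ⁅dimensionSubgroup p G ((i : ℕ) + 1), dimensionSubgroup p G (n + 1 - (i : ℕ))⁆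
  termination_by n => n
  decreasing_by
  · omega
  · omega
  · omega

/-!
Every `r ∈ ℤ_p` acts on `N = ℤ_p^I` by a scalar `c ≡ 1 (mod p)`, and `c ≡ 1 (mod p^(α+1))` when
`r ∈ p^α ℤ_p`. For the subgroups `S ℓ = p^ℓ N ⋊ p^ℓ ℤ_p` this gives `(S α)^p = S (α+1)`,
`⁅S α, G⁆ ≤ S (α+1)` and `S ℓ = G^{p^ℓ}`. Strong induction on the recursion defining `D_n` then
shows `D_n = S ⌈log_p n⌉`: the power term is `S (⌈log_p ⌈n/p⌉⌉ + 1) = S ⌈log_p n⌉`, and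
`⁅D_i, D_j⁆` lies in it because `⌈log_p (i + j)⌉ ≤ max ⌈log_p i⌉ ⌈log_p j⌉ + 1`. Finally,
`S m / S (m+1) ≅ (ℤ/p)^(I ⊔ {*})` by dividing the coordinates by `p^m` and reducing mod `p`.
-/

open Finset Multiplicative SemidirectProduct
open scoped commutatorElement

theorem Nat.clog_add_le_max_add_one {b : ℕ} (hb : 1 < b) (m n : ℕ) :
    Nat.clog b (m + n) ≤ max (Nat.clog b m) (Nat.clog b n) + 1 := by
  refine Nat.clog_le_of_le_pow ?_
  have hm : m ≤ b ^ max (Nat.clog b m) (Nat.clog b n) :=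
    (Nat.le_pow_clog hb m).trans (Nat.pow_le_pow_right (by omega) (le_max_left _ _))
  have hn : n ≤ b ^ max (Nat.clog b m) (Nat.clog b n) :=
    (Nat.le_pow_clog hb n).trans (Nat.pow_le_pow_right (by omega) (le_max_right _ _))
  rw [pow_succ]
  nlinarith

theorem Nat.clog_pow_add_one {b : ℕ} (hb : 1 < b) (m : ℕ) : Nat.clog b (b ^ m + 1) = m + 1 := by
  refine le_antisymm (Nat.clog_le_of_le_pow ?_) ((Nat.lt_clog_iff_pow_lt hb).2 (by omega))
  rw [pow_succ]
  nlinarith [Nat.one_le_pow m b (by omega)]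

theorem dvd_geom_sum_of_dvd_sub_one {R : Type*} [CommRing R] {p : ℕ} {c : R}
    (h : (p : R) ∣ c - 1) : (p : R) ∣ ∑ i ∈ range p, c ^ i := by
  simpa using dvd_geom_sum₂_self (y := 1) h

theorem commutatorElement_eq_mul_mul_inv {G : Type*} [Group G] (x y : G) :
    ⁅x, y⁆ = x * y * (y * x)⁻¹ := by
  rw [commutatorElement_def]
  group

namespace SemidirectProduct

variable {N H : Type*} [Group N] [Group H] {φ : H →* MulAut N}

theorem right_pow (g : N ⋊[φ] H) (n : ℕ) : (g ^ n).right = g.right ^ n :=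
  map_pow rightHom g n

theorem mul_inv_eq_inl_of_right_eq {g h : N ⋊[φ] H} (hgh : g.right = h.right) :
    g * h⁻¹ = inl (g.left * h.left⁻¹) := by
  ext
  · rw [mul_left, inv_left, hgh, ← MulAut.mul_apply, ← map_mul, mul_inv_cancel, map_one,
      MulAut.one_apply, left_inl]
  · rw [mul_right, inv_right, hgh, mul_inv_cancel, right_inl]

end SemidirectProduct

theorem SemidirectProduct.commutatorElement_eq_inl_s12 {N H : Type*} [Group N] [CommGroup H]
    {φ : H →* MulAut N} (x y : N ⋊[φ] H) : ⁅x, y⁆ = inl ((x * y).left * (y * x).left⁻¹) := by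
  rw [commutatorElement_eq_mul_mul_inv, mul_inv_eq_inl_of_right_eq]
  simp only [mul_right, mul_comm]

section ScalarAction

variable {R M : Type*} [CommRing R] [AddCommGroup M] [Module R M]

def ActsByScalar (a : MulAut (Multiplicative M)) (c : R) : Prop :=
  ∀ z, toAdd (a z) = c • toAdd z

theorem ActsByScalar.pow {a : MulAut (Multiplicative M)} {c : R} (h : ActsByScalar a c) :
    ∀ n : ℕ, ActsByScalar (a ^ n) (c ^ n)
  | 0 => fun z => by simp
  | n + 1 => fun z => by rw [pow_succ, MulAut.mul_apply, h.pow n, h, smul_smul, ← pow_succ]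

theorem toAdd_pow_left {H : Type*} [Group H] {φ : H →* MulAut (Multiplicative M)}
    {g : Multiplicative M ⋊[φ] H} {c : R} (hc : ActsByScalar (φ g.right) c) (n : ℕ) :
    toAdd (g ^ n).left = (∑ j ∈ range n, c ^ j) • toAdd g.left := by
  induction n with
  | zero => simp
  | succ n ih =>
    rw [pow_succ, mul_left, toAdd_mul, ih, right_pow, map_pow, hc.pow n, sum_range_succ,
      add_smul]

end ScalarAction

section Digit

variable {p : ℕ} [hp : Fact p.Prime]

/-- `x / p^m mod p` for `x ∈ p^m ℤ_p` (junk value `0` elsewhere). -/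
noncomputable def digit (m : ℕ) (x : ℤ_[p]) : ZMod p :=
  open Classical in
  if h : (p : ℤ_[p]) ^ m ∣ x then PadicInt.toZMod h.choose else 0

theorem digit_pow_mul (m : ℕ) (w : ℤ_[p]) : digit m ((p : ℤ_[p]) ^ m * w) = PadicInt.toZMod w := by
  have hdvd : (p : ℤ_[p]) ^ m ∣ p ^ m * w := dvd_mul_right _ _
  have hpm : (p : ℤ_[p]) ^ m ≠ 0 := pow_ne_zero _ (Nat.cast_ne_zero.2 hp.out.ne_zero)
  rw [digit, dif_pos hdvd, mul_left_cancel₀ hpm hdvd.choose_spec.symm]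

theorem digit_eq_zero_iff {m : ℕ} {x : ℤ_[p]} (hx : (p : ℤ_[p]) ^ m ∣ x) :
    digit m x = 0 ↔ (p : ℤ_[p]) ^ (m + 1) ∣ x := by
  obtain ⟨w, rfl⟩ := hx
  have hpm : (p : ℤ_[p]) ^ m ≠ 0 := pow_ne_zero _ (Nat.cast_ne_zero.2 hp.out.ne_zero)
  rw [digit_pow_mul, pow_succ, mul_dvd_mul_iff_left hpm, ← RingHom.mem_ker,
    PadicInt.ker_toZMod, PadicInt.maximalIdeal_eq_span_p, Ideal.mem_span_singleton]

theorem digit_eq_add {m : ℕ} {x y z : ℤ_[p]} (hx : (p : ℤ_[p]) ^ m ∣ x)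
    (hy : (p : ℤ_[p]) ^ m ∣ y) (hz : (p : ℤ_[p]) ^ (m + 1) ∣ z - (x + y)) :
    digit m z = digit m x + digit m y := by
  obtain ⟨a, rfl⟩ := hx
  obtain ⟨b, rfl⟩ := hy
  obtain ⟨e, he⟩ := hz
  rw [show z = p ^ m * (a + b + p * e) by linear_combination he]
  simp only [digit_pow_mul, map_add, map_mul, map_natCast, ZMod.natCast_self, zero_mul, add_zero]

end Digit

section CongruenceSubgroup

variable {p : ℕ} [hp : Fact p.Prime] {I : Type*}
  {φ : Multiplicative ℤ_[p] →* MulAut (Multiplicative (I → ℤ_[p]))}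
  (hφ : ∀ r, ∃ c : ℤ_[p], (p : ℤ_[p]) ∣ c - 1 ∧ ActsByScalar (φ r) c)

local notation "G" => Multiplicative (I → ℤ_[p]) ⋊[φ] Multiplicative ℤ_[p]

include hφ in
theorem exists_actsByScalar_of_pow_dvd {α : ℕ} {r : Multiplicative ℤ_[p]}
    (hr : (p : ℤ_[p]) ^ α ∣ toAdd r) :
    ∃ c : ℤ_[p], (p : ℤ_[p]) ^ (α + 1) ∣ c - 1 ∧ ActsByScalar (φ r) c := by
  obtain ⟨t, ht⟩ := hr
  obtain ⟨c, hc, hact⟩ := hφ (ofAdd t)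
  have hrt : r = ofAdd t ^ p ^ α := by
    rw [← ofAdd_toAdd r, ht, ← ofAdd_nsmul, nsmul_eq_mul, Nat.cast_pow]
  refine ⟨c ^ p ^ α, by simpa using dvd_sub_pow_of_dvd_sub hc α, ?_⟩
  rw [hrt, map_pow]
  exact hact.pow _

def congruenceSubgroup (ℓ : ℕ) : Subgroup G where
  carrier := {g | (∀ i, (p : ℤ_[p]) ^ ℓ ∣ toAdd g.left i) ∧ (p : ℤ_[p]) ^ ℓ ∣ toAdd g.right}
  one_mem' := ⟨fun _ => dvd_zero _, dvd_zero _⟩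
  mul_mem' := by
    rintro a b ⟨ha, ha'⟩ ⟨hb, hb'⟩
    obtain ⟨c, -, hc⟩ := hφ a.right
    refine ⟨fun i => ?_, ?_⟩
    · rw [mul_left, toAdd_mul, hc, Pi.add_apply, Pi.smul_apply, smul_eq_mul]
      exact dvd_add (ha i) ((hb i).mul_left c)
    · rw [mul_right, toAdd_mul]
      exact dvd_add ha' hb'
  inv_mem' := by
    rintro a ⟨ha, ha'⟩
    obtain ⟨c, -, hc⟩ := hφ a.right⁻¹
    refine ⟨fun i => ?_, ?_⟩
    · rw [inv_left, hc, toAdd_inv, Pi.smul_apply, Pi.neg_apply, smul_eq_mul]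
      exact (ha i).neg_right.mul_left c
    · rw [inv_right, toAdd_inv]
      exact ha'.neg_right

local notation "S" => congruenceSubgroup hφ

theorem mem_congruenceSubgroup {ℓ : ℕ} {g : G} :
    g ∈ S ℓ ↔ (∀ i, (p : ℤ_[p]) ^ ℓ ∣ toAdd g.left i) ∧ (p : ℤ_[p]) ^ ℓ ∣ toAdd g.right :=
  Iff.rfl

theorem congruenceSubgroup_zero : S 0 = ⊤ := by
  ext g
  simp [mem_congruenceSubgroup]

theorem congruenceSubgroup_antitone : Antitone S := fun _ _ h _ hg =>
  ⟨fun i => (pow_dvd_pow _ h).trans (hg.1 i), (pow_dvd_pow _ h).trans hg.2⟩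

theorem inl_pow_mem_congruenceSubgroup (ℓ : ℕ) (x : Multiplicative (I → ℤ_[p])) :
    (inl (x ^ p ^ ℓ) : G) ∈ S ℓ := by
  refine ⟨fun i => ⟨toAdd x i, ?_⟩, dvd_zero _⟩
  rw [left_inl, toAdd_pow, Pi.smul_apply, nsmul_eq_mul, Nat.cast_pow]

theorem inr_pow_mem_congruenceSubgroup (ℓ : ℕ) (y : Multiplicative ℤ_[p]) :
    (inr (y ^ p ^ ℓ) : G) ∈ S ℓ := by
  refine ⟨fun i => dvd_zero _, ⟨toAdd y, ?_⟩⟩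
  rw [right_inr, toAdd_pow, nsmul_eq_mul, Nat.cast_pow]

theorem congruenceSubgroup_le {ℓ : ℕ} {K : Subgroup G}
    (hl : ∀ x : Multiplicative (I → ℤ_[p]), (inl (x ^ p ^ ℓ) : G) ∈ K)
    (hr : ∀ y : Multiplicative ℤ_[p], (inr (y ^ p ^ ℓ) : G) ∈ K) : S ℓ ≤ K := by
  rintro g ⟨hg, ⟨t, ht⟩⟩
  choose w hw using hg
  have hleft : g.left = ofAdd w ^ p ^ ℓ := by
    ext i
    simp [toAdd_pow, hw i]
  have hright : g.right = ofAdd t ^ p ^ ℓ := by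
    rw [← ofAdd_toAdd g.right, ht, ← ofAdd_nsmul, nsmul_eq_mul, Nat.cast_pow]
  rw [← inl_left_mul_inr_right g, hleft, hright]
  exact K.mul_mem (hl _) (hr _)

theorem pow_mem_congruenceSubgroup {α : ℕ} {g : G} (hg : g ∈ S α) : g ^ p ∈ S (α + 1) := by
  obtain ⟨c, hc, hact⟩ := hφ g.right
  refine ⟨fun i => ?_, ?_⟩
  · rw [toAdd_pow_left hact, Pi.smul_apply, smul_eq_mul, pow_succ']
    exact mul_dvd_mul (dvd_geom_sum_of_dvd_sub_one hc) (hg.1 i)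
  · rw [right_pow, toAdd_pow, nsmul_eq_mul, pow_succ']
    exact mul_dvd_mul_left _ hg.2

theorem pow_pow_mem_congruenceSubgroup (g : G) : ∀ ℓ : ℕ, g ^ p ^ ℓ ∈ S ℓ
  | 0 => by simp [congruenceSubgroup_zero]
  | ℓ + 1 => by
    rw [pow_succ, pow_mul]
    exact pow_mem_congruenceSubgroup hφ (pow_pow_mem_congruenceSubgroup g ℓ)

theorem closure_pow_image_congruenceSubgroup (α : ℕ) :
    Subgroup.closure ((fun x : G => x ^ p) '' (S α : Set G)) = S (α + 1) := by
  refine le_antisymm ?_ (congruenceSubgroup_le hφ (fun x => ?_) (fun y => ?_))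
  · rw [Subgroup.closure_le]
    rintro _ ⟨x, hx, rfl⟩
    exact pow_mem_congruenceSubgroup hφ hx
  · refine Subgroup.subset_closure ⟨_, inl_pow_mem_congruenceSubgroup hφ α x, ?_⟩
    simp only [← map_pow, ← pow_mul, ← pow_succ]
  · refine Subgroup.subset_closure ⟨_, inr_pow_mem_congruenceSubgroup hφ α y, ?_⟩
    simp only [← map_pow, ← pow_mul, ← pow_succ]

theorem closure_pow_pow_eq_congruenceSubgroup (ℓ : ℕ) :
    Subgroup.closure ((fun x : G => x ^ p ^ ℓ) '' Set.univ) = S ℓ := by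
  refine le_antisymm ?_ (congruenceSubgroup_le hφ (fun x => ?_) (fun y => ?_))
  · rw [Subgroup.closure_le]
    rintro _ ⟨x, -, rfl⟩
    exact pow_pow_mem_congruenceSubgroup hφ x ℓ
  · exact Subgroup.subset_closure ⟨inl x, Set.mem_univ _, (map_pow _ _ _).symm⟩
  · exact Subgroup.subset_closure ⟨inr y, Set.mem_univ _, (map_pow _ _ _).symm⟩

theorem commutatorElement_mem_congruenceSubgroup {α : ℕ} {x : G} (hx : x ∈ S α) (y : G) :
    ⁅x, y⁆ ∈ S (α + 1) := by
  obtain ⟨c, hc, hcx⟩ := exists_actsByScalar_of_pow_dvd hφ hx.2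
  obtain ⟨d, hd, hdy⟩ := hφ y.right
  rw [commutatorElement_eq_inl_s12]
  refine ⟨fun i => ?_, dvd_zero _⟩
  have hcomm : toAdd ((x * y).left * (y * x).left⁻¹) i
      = (c - 1) * toAdd y.left i - (d - 1) * toAdd x.left i := by
    rw [mul_left, mul_left, toAdd_mul, toAdd_inv, toAdd_mul, toAdd_mul, hcx, hdy]
    simp only [Pi.add_apply, Pi.neg_apply, Pi.smul_apply, smul_eq_mul]
    ring
  rw [left_inl, hcomm]
  refine dvd_sub (hc.mul_right _) ?_
  rw [pow_succ']
  exact mul_dvd_mul hd (hx.1 i)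

theorem commutator_congruenceSubgroup_le {α β γ : ℕ} (h : γ ≤ max α β + 1) :
    ⁅S α, S β⁆ ≤ S γ := by
  rcases le_total β α with hβα | hαβ
  · rw [Subgroup.commutator_le]
    exact fun x hx y _ => congruenceSubgroup_antitone hφ (by omega)
      (commutatorElement_mem_congruenceSubgroup hφ hx y)
  · rw [Subgroup.commutator_comm, Subgroup.commutator_le]
    exact fun x hx y _ => congruenceSubgroup_antitone hφ (by omega)
      (commutatorElement_mem_congruenceSubgroup hφ hx y)

theorem dimensionSubgroup_eq_congruenceSubgroup (n : ℕ) :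
    dimensionSubgroup p G n = S (Nat.clog p n) := by
  have hp1 : 1 < p := hp.out.one_lt
  induction n using Nat.strong_induction_on with
  | _ n ih =>
  match n with
  | 0 => rw [dimensionSubgroup, Nat.clog_zero_right, congruenceSubgroup_zero]
  | 1 => rw [dimensionSubgroup, Nat.clog_one_right, congruenceSubgroup_zero]
  | m + 2 =>
    have hq : (m + 2 + p - 1) / p < m + 2 := by
      rw [Nat.div_lt_iff_lt_mul (by omega), show m + 2 + p - 1 = m + 1 + p by omega]
      nlinarith
    rw [dimensionSubgroup, min_eq_left (by omega), ih _ hq, closure_pow_image_congruenceSubgroup,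
      ← Nat.clog_of_two_le hp1 (by omega)]
    refine le_antisymm (sup_le le_rfl (iSup_le fun i => ?_)) le_sup_left
    have hi := i.2
    rw [ih _ (by omega), ih _ (by omega)]
    refine commutator_congruenceSubgroup_le hφ ?_
    have := Nat.clog_add_le_max_add_one hp1 (i + 1) (m + 1 - i)
    rwa [show (i : ℕ) + 1 + (m + 1 - i) = m + 2 by omega] at this

-- The coordinate `none` is the `ℤ_p`-factor, i.e. the `*` of `I ⊔ {*}`.
def coords (g : G) : Option I → ℤ_[p] := fun o => o.elim (toAdd g.right) (toAdd g.left)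

def ofCoords (v : Option I → ℤ_[p]) : G := ⟨ofAdd fun i => v (some i), ofAdd (v none)⟩

theorem coords_ofCoords (v : Option I → ℤ_[p]) : coords (ofCoords v : G) = v := by
  funext o
  cases o <;> rfl

theorem mem_congruenceSubgroup_iff_coords {ℓ : ℕ} {g : G} :
    g ∈ S ℓ ↔ ∀ o, (p : ℤ_[p]) ^ ℓ ∣ coords g o := by
  simp [mem_congruenceSubgroup, Option.forall, coords, and_comm]

theorem coords_mul_sub_dvd {m : ℕ} {g h : G} (hh : h ∈ S m) (o : Option I) :
    (p : ℤ_[p]) ^ (m + 1) ∣ coords (g * h) o - (coords g o + coords h o) := by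
  obtain ⟨c, hc, hact⟩ := hφ g.right
  cases o with
  | none => simp [coords, mul_right]
  | some i =>
    have : coords (g * h) (some i) - (coords g (some i) + coords h (some i))
        = (c - 1) * toAdd h.left i := by
      simp only [coords, Option.elim_some, mul_left, toAdd_mul, hact h.left, Pi.add_apply,
        Pi.smul_apply, smul_eq_mul]
      ring
    rw [this, pow_succ']
    exact mul_dvd_mul hc (hh.1 i)

theorem exists_surjective_ker_eq_congruenceSubgroup (m : ℕ) :
    ∃ f : S m →* (Option I → Multiplicative (ZMod p)),
      Function.Surjective f ∧ f.ker = (S (m + 1)).subgroupOf (S m) := by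
  have hdvd (g : S m) (o : Option I) : (p : ℤ_[p]) ^ m ∣ coords (g : G) o :=
    (mem_congruenceSubgroup_iff_coords hφ).1 g.2 o
  refine ⟨{ toFun := fun g o => ofAdd (digit m (coords (g : G) o))
            map_one' := ?_
            map_mul' := fun g h => funext fun o => ?_ }, fun v => ?_, ?_⟩
  · funext o
    cases o <;> simpa [coords] using digit_pow_mul (p := p) m 0
  · exact congrArg ofAdd (digit_eq_add (hdvd g o) (hdvd h o) (coords_mul_sub_dvd hφ h.2 o))
  · choose w hw using fun o => ZMod.ringHom_surjective PadicInt.toZMod (toAdd (v o))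
    have hmem : ofCoords (fun o => (p : ℤ_[p]) ^ m * w o) ∈ S m :=
      (mem_congruenceSubgroup_iff_coords hφ).2 fun o => by simp [coords_ofCoords]
    refine ⟨⟨_, hmem⟩, funext fun o => ?_⟩
    simp [coords_ofCoords, digit_pow_mul, hw]
  · ext g
    simp only [MonoidHom.mem_ker, Subgroup.mem_subgroupOf, MonoidHom.coe_mk, OneHom.coe_mk,
      funext_iff, Pi.one_apply, ofAdd_eq_one, digit_eq_zero_iff (hdvd g _),
      mem_congruenceSubgroup_iff_coords hφ]

end CongruenceSubgroup

theorem stmt12_general (p k : ℕ) [Fact p.Prime] (hk : 1 ≤ k) (I : Type*)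
    (φ : Multiplicative ℤ_[p] →* MulAut (Multiplicative (I → ℤ_[p])))
    (hφ : ∀ t : ℤ_[p], ∃ m : ℤ_[p], ∀ z, φ (Multiplicative.ofAdd t) z =
        Multiplicative.ofAdd ((1 + (p : ℤ_[p]) ^ k * m) • Multiplicative.toAdd z)) :
    (∀ n ℓ : ℕ, 1 ≤ ℓ → p ^ (ℓ - 1) < n → n ≤ p ^ ℓ →
      dimensionSubgroup p (Multiplicative (I → ℤ_[p]) ⋊[φ] Multiplicative ℤ_[p]) n =
        Subgroup.closure
          ((fun x : Multiplicative (I → ℤ_[p]) ⋊[φ] Multiplicative ℤ_[p] =>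
              x ^ p ^ ℓ) '' Set.univ)) ∧
    (∀ n : ℕ, 1 ≤ n → (¬ ∃ m : ℕ, n = p ^ m) →
      dimensionSubgroup p (Multiplicative (I → ℤ_[p]) ⋊[φ] Multiplicative ℤ_[p]) n =
        dimensionSubgroup p (Multiplicative (I → ℤ_[p]) ⋊[φ] Multiplicative ℤ_[p]) (n + 1)) ∧
    (∀ n m : ℕ, n = p ^ m →
      ∃ f : ↥(dimensionSubgroup p
              (Multiplicative (I → ℤ_[p]) ⋊[φ] Multiplicative ℤ_[p]) n) →*
            (Option I → Multiplicative (ZMod p)),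
        Function.Surjective f ∧
          f.ker =
            (dimensionSubgroup p
                (Multiplicative (I → ℤ_[p]) ⋊[φ] Multiplicative ℤ_[p]) (n + 1)).subgroupOf
              (dimensionSubgroup p
                (Multiplicative (I → ℤ_[p]) ⋊[φ] Multiplicative ℤ_[p]) n)) := by
  have hp : 1 < p := (Fact.out : p.Prime).one_lt
  have hscalar : ∀ r, ∃ c : ℤ_[p], (p : ℤ_[p]) ∣ c - 1 ∧ ActsByScalar (φ r) c := fun r => by
    obtain ⟨m, hm⟩ := hφ (toAdd r)
    refine ⟨1 + p ^ k * m, ?_, fun z => by simpa using congrArg toAdd (hm z)⟩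
    simpa using (dvd_pow_self (p : ℤ_[p]) (by omega : k ≠ 0)).mul_right m
  have hD := dimensionSubgroup_eq_congruenceSubgroup hscalar
  refine ⟨fun n ℓ hℓ hlo hhi => ?_, fun n _ hn => ?_, fun n m hnm => ?_⟩
  · have hclog : Nat.clog p n = ℓ := by
      have := (Nat.lt_clog_iff_pow_lt hp).2 hlo
      exact le_antisymm (Nat.clog_le_of_le_pow hhi) (by omega)
    rw [hD, hclog, closure_pow_pow_eq_congruenceSubgroup]
  · rw [hD, hD, (Nat.clog_eq_clog_succ_iff hp).2 fun h => hn ⟨_, h.symm⟩]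
  · rw [hD, hD, hnm, Nat.clog_pow _ _ hp, Nat.clog_pow_add_one hp]
    exact exists_surjective_ker_eq_congruenceSubgroup hscalar m

/-- Let `p` be an odd prime, `k ≥ 1`, and `G = ⟨σ⟩ ⋉ N`, `⟨σ⟩ ≅ ℤ_p`, `N ≅ ℤ_p^I`,
with `σ` acting on `N` by the scalar `1 + p^k` (every element of the `ℤ_p`-factor
acting by a scalar in `1 + p^kℤ_p`).  Then for all `n` with `p^{ℓ-1} < n ≤ p^ℓ` the
dimension subgroup satisfies `D_n(G) = G^{p^ℓ}`; consequently
`D_n(G)/D_{n+1}(G) ≅ (ℤ/pℤ)^{I ∪ {*}}` when `n` is a power of `p`, and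
`D_n(G) = D_{n+1}(G)` otherwise. -/
theorem stmt12 (p k : ℕ) [Fact p.Prime] (hodd : Odd p) (hk : 1 ≤ k) (I : Type*)
    (φ : Multiplicative ℤ_[p] →* MulAut (Multiplicative (I → ℤ_[p])))
    (hφ1 : ∀ z, φ (Multiplicative.ofAdd 1) z =
        Multiplicative.ofAdd ((1 + (p : ℤ_[p]) ^ k) • Multiplicative.toAdd z))
    (hφ : ∀ t : ℤ_[p], ∃ m : ℤ_[p], ∀ z, φ (Multiplicative.ofAdd t) z =
        Multiplicative.ofAdd ((1 + (p : ℤ_[p]) ^ k * m) • Multiplicative.toAdd z)) :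
    (∀ n ℓ : ℕ, 1 ≤ ℓ → p ^ (ℓ - 1) < n → n ≤ p ^ ℓ →
      dimensionSubgroup p (Multiplicative (I → ℤ_[p]) ⋊[φ] Multiplicative ℤ_[p]) n =
        Subgroup.closure
          ((fun x : Multiplicative (I → ℤ_[p]) ⋊[φ] Multiplicative ℤ_[p] =>
              x ^ p ^ ℓ) '' Set.univ)) ∧
    (∀ n : ℕ, 1 ≤ n → (¬ ∃ m : ℕ, n = p ^ m) →
      dimensionSubgroup p (Multiplicative (I → ℤ_[p]) ⋊[φ] Multiplicative ℤ_[p]) n =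
        dimensionSubgroup p (Multiplicative (I → ℤ_[p]) ⋊[φ] Multiplicative ℤ_[p]) (n + 1)) ∧
    (∀ n m : ℕ, n = p ^ m →
      ∃ f : ↥(dimensionSubgroup p
              (Multiplicative (I → ℤ_[p]) ⋊[φ] Multiplicative ℤ_[p]) n) →*
            (Option I → Multiplicative (ZMod p)),
        Function.Surjective f ∧
          f.ker =
            (dimensionSubgroup p
                (Multiplicative (I → ℤ_[p]) ⋊[φ] Multiplicative ℤ_[p]) (n + 1)).subgroupOf
              (dimensionSubgroup p
                (Multiplicative (I → ℤ_[p]) ⋊[φ] Multiplicative ℤ_[p]) n)) :=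
  stmt12_general p k hk I φ hφ
end

section
/- Let p be an odd prime and G = ⟨σ⟩ ⋉ N with ⟨σ⟩ ≅ ℤ_p, N = ℤ_p^I abelian, and σ acting on N by multiplication by 1+p^k with k ≥ 1. Then for every n ≥ 1, the map x ↦ x^{p^n} induces a group isomorphism G/G^p ≅ G^{p^n}/G^{p^{n+1}}. -/
/-- The (normal) subgroup `G^{m}` of a group `G` generated by `m`-th powers. -/
abbrev powSubgroup (G : Type*) [Group G] (m : ℕ) : Subgroup G :=
  Subgroup.normalClosure ((fun x : G => x ^ m) '' Set.univ)

/-!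
Every `t ∈ ℤ_p` acts on `N = ℤ_p^I` as multiplication by a scalar `w t ≡ 1 (mod p)`. As `p` is
odd, `1 + w + ⋯ + w^(p-1) ≡ p (mod p²)`, so by induction `(a, t)^(p^n) = (p^n v a, p^n t)` with
`v ≡ 1 (mod p)` a unit. Hence the `p^n`-th powers are exactly the elements all of whose coordinates
are divisible by `p^n`; they form a normal subgroup, which is therefore
`G^(p^n) = N^(p^n) ⋊ ℤ_p^(p^n)`. In coordinates, `x ↦ x^(p^n)` is then a homomorphism modulo
`G^(p^(n+1))` with kernel `G^p`, onto `G^(p^n)`.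
-/

open Finset Multiplicative

namespace PadicInt

variable {p : ℕ} [Fact p.Prime]

theorem toZMod_eq_zero_iff_dvd {x : ℤ_[p]} : toZMod x = 0 ↔ (p : ℤ_[p]) ∣ x := by
  rw [← RingHom.mem_ker, ker_toZMod, maximalIdeal_eq_span_p, Ideal.mem_span_singleton]

theorem isUnit_of_toZMod_eq_one {x : ℤ_[p]} (hx : toZMod x = 1) : IsUnit x := by
  by_contra h
  have : toZMod x = 0 := by rwa [← RingHom.mem_ker, ker_toZMod]
  exact one_ne_zero (hx.symm.trans this)

theorem exists_geom_sum_eq_mul (hodd : Odd p) {c : ℤ_[p]} (hc : toZMod c = 1) :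
    ∃ v, ∑ i ∈ range p, c ^ i = p * v ∧ toZMod v = 1 := by
  obtain ⟨b, hb⟩ := toZMod_eq_zero_iff_dvd.mp (show toZMod (c - 1) = 0 by simp [hc])
  obtain rfl : c = 1 + p * b := by linear_combination hb
  obtain ⟨d, hd⟩ := odd_sq_dvd_geom_sum₂_sub 1 b hodd
  simp only [one_pow, mul_one] at hd
  exact ⟨1 + p * d, by linear_combination hd, by simp⟩

end PadicInt

theorem powSubgroup_eq_of_image_pow_eq {G : Type*} [Group G] {m : ℕ} {H : Subgroup G}
    (h : (fun x : G => x ^ m) '' Set.univ = H) : powSubgroup G m = H := by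
  have : H.Normal := ⟨fun x hx g => by
    rw [← SetLike.mem_coe, ← h] at hx ⊢
    obtain ⟨y, -, rfl⟩ := hx
    exact ⟨g * y * g⁻¹, trivial, conj_pow⟩⟩
  rw [powSubgroup, h, Subgroup.normalClosure_eq_self]

theorem exists_quotientMulEquiv_of_pow {G : Type*} [Group G] (q : ℕ) (K P Q : Subgroup G)
    [K.Normal] [Q.Normal] (hP : ∀ x : G, x ^ q ∈ P)
    (hmul : ∀ x y : G, ((x * y) ^ q)⁻¹ * (x ^ q * y ^ q) ∈ Q)
    (hker : ∀ x : G, x ^ q ∈ Q ↔ x ∈ K) (hsurj : ∀ y ∈ P, ∃ x : G, x ^ q = y) :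
    ∃ e : G ⧸ K ≃* P ⧸ Q.subgroupOf P,
      ∀ x : G, e (QuotientGroup.mk x) = QuotientGroup.mk ⟨x ^ q, hP x⟩ := by
  let f : G →* P ⧸ Q.subgroupOf P :=
    MonoidHom.mk' (fun x => QuotientGroup.mk ⟨x ^ q, hP x⟩) fun x y => by
      rw [← QuotientGroup.mk_mul, QuotientGroup.eq, Subgroup.mem_subgroupOf]
      exact hmul x y
  have hK : K = f.ker := by
    ext x
    rw [MonoidHom.mem_ker, ← hker]
    exact ((QuotientGroup.eq_one_iff (⟨x ^ q, hP x⟩ : P)).trans Subgroup.mem_subgroupOf).symm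
  have hf : Function.Surjective f := by
    rintro ⟨y⟩
    obtain ⟨x, hx⟩ := hsurj y y.2
    exact ⟨x, congrArg QuotientGroup.mk (Subtype.ext hx)⟩
  exact ⟨(QuotientGroup.quotientMulEquivOfEq hK).trans
    (QuotientGroup.quotientKerEquivOfSurjective f hf), fun x => rfl⟩

theorem Multiplicative.mem_range_powMonoidHom_iff {R : Type*} [CommRing R] {m : ℕ}
    {x : Multiplicative R} : x ∈ (powMonoidHom m).range ↔ (m : R) ∣ toAdd x := by
  constructor
  · rintro ⟨y, rfl⟩
    exact ⟨toAdd y, by simp [nsmul_eq_mul]⟩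
  · rintro ⟨y, hy⟩
    exact ⟨ofAdd y, toAdd.injective (by simp [hy, nsmul_eq_mul])⟩

theorem Multiplicative.mem_range_powMonoidHom_pi_iff {I R : Type*} [CommRing R] {m : ℕ}
    {x : Multiplicative (I → R)} : x ∈ (powMonoidHom m).range ↔ ∀ i, (m : R) ∣ toAdd x i := by
  constructor
  · rintro ⟨y, rfl⟩ i
    exact ⟨toAdd y i, by simp [nsmul_eq_mul]⟩
  · intro h
    choose y hy using h
    exact ⟨ofAdd y, toAdd.injective (funext fun i => by simp [hy, nsmul_eq_mul])⟩

namespace SemidirectProduct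

section

variable {N G : Type*} [Group N] [Group G] {φ : G →* MulAut N}

def prodSubgroup (A : Subgroup N) (B : Subgroup G) (hA : ∀ g, ∀ a ∈ A, φ g a ∈ A) :
    Subgroup (N ⋊[φ] G) where
  carrier := {x | x.left ∈ A ∧ x.right ∈ B}
  one_mem' := ⟨A.one_mem, B.one_mem⟩
  mul_mem' hx hy := ⟨A.mul_mem hx.1 (hA _ _ hy.1), B.mul_mem hx.2 hy.2⟩
  inv_mem' hx := ⟨hA _ _ (A.inv_mem hx.1), B.inv_mem hx.2⟩

variable {A : Subgroup N} {B : Subgroup G} {hA : ∀ g, ∀ a ∈ A, φ g a ∈ A}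

theorem mem_prodSubgroup {x : N ⋊[φ] G} :
    x ∈ prodSubgroup A B hA ↔ x.left ∈ A ∧ x.right ∈ B :=
  Iff.rfl

theorem inv_mul_mem_prodSubgroup_iff {x y : N ⋊[φ] G} :
    x⁻¹ * y ∈ prodSubgroup A B hA ↔ x.left⁻¹ * y.left ∈ A ∧ x.right⁻¹ * y.right ∈ B := by
  have hleft : (x⁻¹ * y).left = φ x.right⁻¹ (x.left⁻¹ * y.left) := by
    rw [mul_left, inv_left, inv_right, map_mul]
  rw [mem_prodSubgroup, hleft, mul_right, inv_right]
  refine and_congr_left' ⟨fun h => ?_, hA _ _⟩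
  simpa [map_inv] using hA x.right _ h

end

section

variable {N G : Type*} [CommGroup N] [CommGroup G] {φ : G →* MulAut N}

def powRangeSubgroup (m : ℕ) : Subgroup (N ⋊[φ] G) :=
  prodSubgroup (powMonoidHom m).range (powMonoidHom m).range fun g _ ⟨b, hb⟩ =>
    ⟨φ g b, by rw [← hb]; exact (map_pow (φ g) b m).symm⟩

end

end SemidirectProduct

open SemidirectProduct PadicInt

namespace PadicSemidirect

variable {p : ℕ} [Fact p.Prime] {I : Type*}
  {φ : Multiplicative ℤ_[p] →* MulAut (Multiplicative (I → ℤ_[p]))}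

local notation "G" => Multiplicative (I → ℤ_[p]) ⋊[φ] Multiplicative ℤ_[p]

theorem mk_mem_powRangeSubgroup_iff (n : ℕ) (a : I → ℤ_[p]) (s : ℤ_[p]) :
    (⟨ofAdd a, ofAdd s⟩ : G) ∈ powRangeSubgroup (p ^ n) ↔
      (∀ i, (p : ℤ_[p]) ^ n ∣ a i) ∧ (p : ℤ_[p]) ^ n ∣ s := by
  rw [powRangeSubgroup, mem_prodSubgroup, mem_range_powMonoidHom_pi_iff,
    mem_range_powMonoidHom_iff]
  push_cast
  rfl

theorem mk_inv_mul_mk_mem_powRangeSubgroup_iff (n : ℕ) (a b : I → ℤ_[p]) (s t : ℤ_[p]) :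
    (⟨ofAdd a, ofAdd s⟩ : G)⁻¹ * ⟨ofAdd b, ofAdd t⟩ ∈ powRangeSubgroup (p ^ n) ↔
      (∀ i, (p : ℤ_[p]) ^ n ∣ b i - a i) ∧ (p : ℤ_[p]) ^ n ∣ t - s := by
  rw [powRangeSubgroup, inv_mul_mem_prodSubgroup_iff, mem_range_powMonoidHom_pi_iff,
    mem_range_powMonoidHom_iff]
  simp [neg_add_eq_sub]

variable {w : ℤ_[p] → ℤ_[p]} (hw : ∀ t z, φ (ofAdd t) z = ofAdd (w t • toAdd z))
include hw

theorem mk_mul_mk (a b : I → ℤ_[p]) (s t : ℤ_[p]) :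
    (⟨ofAdd a, ofAdd s⟩ : G) * ⟨ofAdd b, ofAdd t⟩ = ⟨ofAdd (a + w s • b), ofAdd (s + t)⟩ := by
  rw [SemidirectProduct.mul_def, hw]
  rfl

theorem mk_pow (a : I → ℤ_[p]) (t : ℤ_[p]) (j : ℕ) :
    (⟨ofAdd a, ofAdd t⟩ : G) ^ j = ⟨ofAdd ((∑ i ∈ range j, w t ^ i) • a), ofAdd (j * t)⟩ := by
  induction j with
  | zero => ext <;> simp
  | succ j ih =>
    rw [pow_succ', ih, mk_mul_mk hw, geom_sum_succ, smul_smul, add_smul, one_smul, add_comm a]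
    push_cast
    ring_nf

variable (hodd : Odd p) (hw1 : ∀ t, toZMod (w t) = 1)
include hodd hw1

theorem exists_mk_pow_prime_pow (n : ℕ) (t : ℤ_[p]) :
    ∃ v : ℤ_[p], toZMod v = 1 ∧ ∀ a : I → ℤ_[p],
      (⟨ofAdd a, ofAdd t⟩ : G) ^ p ^ n = ⟨ofAdd ((p ^ n * v) • a), ofAdd (p ^ n * t)⟩ := by
  induction n with
  | zero => exact ⟨1, map_one _, fun a => by simp⟩
  | succ n ih =>
    obtain ⟨v, hv, hpow⟩ := ih
    obtain ⟨u, hsum, hu⟩ := exists_geom_sum_eq_mul hodd (hw1 (p ^ n * t))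
    refine ⟨v * u, by simp [hv, hu], fun a => ?_⟩
    rw [pow_succ, pow_mul, hpow, mk_pow hw, hsum, smul_smul]
    ring_nf

theorem image_pow_prime_pow (n : ℕ) :
    (fun x : G => x ^ p ^ n) '' Set.univ = (powRangeSubgroup (p ^ n) : Subgroup G) := by
  ext y
  obtain ⟨b, t, rfl⟩ : ∃ b t, y = (⟨ofAdd b, ofAdd t⟩ : G) := ⟨_, _, rfl⟩
  rw [SetLike.mem_coe, mk_mem_powRangeSubgroup_iff]
  constructor
  · rintro ⟨x, -, hx⟩
    obtain ⟨a, s, rfl⟩ : ∃ a s, x = (⟨ofAdd a, ofAdd s⟩ : G) := ⟨_, _, rfl⟩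
    obtain ⟨v, -, hpow⟩ := exists_mk_pow_prime_pow hw hodd hw1 n s
    simp only [hpow, SemidirectProduct.ext_iff, ofAdd.injective.eq_iff] at hx
    obtain ⟨rfl, rfl⟩ := hx
    exact ⟨fun i => ⟨v * a i, by simp [mul_assoc]⟩, dvd_mul_right _ _⟩
  · rintro ⟨hb, s, rfl⟩
    choose c hc using hb
    obtain ⟨v, hv, hpow⟩ := exists_mk_pow_prime_pow hw hodd hw1 n s
    obtain ⟨u, rfl⟩ := isUnit_of_toZMod_eq_one hv
    refine ⟨⟨ofAdd fun i => ↑u⁻¹ * c i, ofAdd s⟩, trivial, ?_⟩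
    dsimp only
    rw [hpow]
    congr 2
    funext i
    simp [hc, mul_assoc]

theorem powSubgroup_eq_powRangeSubgroup (n : ℕ) :
    powSubgroup G (p ^ n) = powRangeSubgroup (p ^ n) :=
  powSubgroup_eq_of_image_pow_eq (image_pow_prime_pow hw hodd hw1 n)

theorem exists_pow_prime_pow_eq_of_mem {n : ℕ} {y : G} (hy : y ∈ powSubgroup G (p ^ n)) :
    ∃ x, x ^ p ^ n = y := by
  rw [powSubgroup_eq_powRangeSubgroup hw hodd hw1, ← SetLike.mem_coe,
    ← image_pow_prime_pow hw hodd hw1] at hy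
  obtain ⟨x, -, hx⟩ := hy
  exact ⟨x, hx⟩

theorem pow_prime_pow_mem_powSubgroup_iff (n m : ℕ) (x : G) :
    x ^ p ^ n ∈ powSubgroup G (p ^ (n + m)) ↔ x ∈ powSubgroup G (p ^ m) := by
  rw [powSubgroup_eq_powRangeSubgroup hw hodd hw1, powSubgroup_eq_powRangeSubgroup hw hodd hw1]
  obtain ⟨a, s, rfl⟩ : ∃ a s, x = (⟨ofAdd a, ofAdd s⟩ : G) := ⟨_, _, rfl⟩
  obtain ⟨v, hv, hpow⟩ := exists_mk_pow_prime_pow hw hodd hw1 n s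
  rw [hpow, mk_mem_powRangeSubgroup_iff, mk_mem_powRangeSubgroup_iff]
  simp only [pow_add, Pi.smul_apply, smul_eq_mul, mul_assoc,
    mul_dvd_mul_iff_left (pow_ne_zero n prime_p.ne_zero), (isUnit_of_toZMod_eq_one hv).dvd_mul_left]

theorem inv_mul_pow_prime_pow_mem (n : ℕ) (x y : G) :
    ((x * y) ^ p ^ n)⁻¹ * (x ^ p ^ n * y ^ p ^ n) ∈ powSubgroup G (p ^ (n + 1)) := by
  rw [powSubgroup_eq_powRangeSubgroup hw hodd hw1]
  obtain ⟨a, s, rfl⟩ : ∃ a s, x = (⟨ofAdd a, ofAdd s⟩ : G) := ⟨_, _, rfl⟩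
  obtain ⟨b, t, rfl⟩ : ∃ b t, y = (⟨ofAdd b, ofAdd t⟩ : G) := ⟨_, _, rfl⟩
  obtain ⟨v₁, hv₁, hx⟩ := exists_mk_pow_prime_pow hw hodd hw1 n s
  obtain ⟨v₂, hv₂, hy⟩ := exists_mk_pow_prime_pow hw hodd hw1 n t
  obtain ⟨v₃, hv₃, hxy⟩ := exists_mk_pow_prime_pow hw hodd hw1 n (s + t)
  rw [mk_mul_mk hw, hx, hy, hxy, mk_mul_mk hw, mk_inv_mul_mk_mem_powRangeSubgroup_iff]
  refine ⟨fun i => ?_, by ring_nf; exact dvd_zero _⟩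
  have key : ((p ^ n * v₁) • a + w (p ^ n * s) • (p ^ n * v₂) • b) i
      - ((p ^ n * v₃) • (a + w s • b)) i
      = p ^ n * ((v₁ - v₃) * a i + (w (p ^ n * s) * v₂ - v₃ * w s) * b i) := by
    simp only [Pi.add_apply, Pi.smul_apply, smul_eq_mul]
    ring
  rw [key, pow_succ, mul_dvd_mul_iff_left (pow_ne_zero n prime_p.ne_zero), ← toZMod_eq_zero_iff_dvd]
  simp [hv₁, hv₂, hv₃, hw1]

end PadicSemidirect

open PadicSemidirect

theorem stmt17_general (p k : ℕ) [Fact p.Prime] (hodd : Odd p) (hk : 1 ≤ k) (I : Type*)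
    (φ : Multiplicative ℤ_[p] →* MulAut (Multiplicative (I → ℤ_[p])))
    (hφ : ∀ t : ℤ_[p], ∃ m : ℤ_[p], ∀ z, φ (Multiplicative.ofAdd t) z =
        Multiplicative.ofAdd ((1 + (p : ℤ_[p]) ^ k * m) • Multiplicative.toAdd z)) :
    ∀ n : ℕ, 1 ≤ n →
      ∃ e : (Multiplicative (I → ℤ_[p]) ⋊[φ] Multiplicative ℤ_[p]) ⧸
              powSubgroup (Multiplicative (I → ℤ_[p]) ⋊[φ] Multiplicative ℤ_[p]) p ≃*
            ↥(powSubgroup (Multiplicative (I → ℤ_[p]) ⋊[φ] Multiplicative ℤ_[p]) (p ^ n)) ⧸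
              (powSubgroup (Multiplicative (I → ℤ_[p]) ⋊[φ] Multiplicative ℤ_[p])
                  (p ^ (n + 1))).subgroupOf
                (powSubgroup (Multiplicative (I → ℤ_[p]) ⋊[φ] Multiplicative ℤ_[p]) (p ^ n)),
        ∀ x : Multiplicative (I → ℤ_[p]) ⋊[φ] Multiplicative ℤ_[p],
          e (QuotientGroup.mk x) =
            QuotientGroup.mk
              ⟨x ^ p ^ n,
                Subgroup.subset_normalClosure
                  (Set.mem_image_of_mem _ (Set.mem_univ x))⟩ := by
  intro n _
  choose m hw using hφ
  have hw1 (t : ℤ_[p]) : toZMod (1 + (p : ℤ_[p]) ^ k * m t) = 1 := by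
    simp [zero_pow (Nat.one_le_iff_ne_zero.mp hk)]
  exact exists_quotientMulEquiv_of_pow _ _ _ _
    (fun x => Subgroup.subset_normalClosure (Set.mem_image_of_mem _ (Set.mem_univ x)))
    (inv_mul_pow_prime_pow_mem hw hodd hw1 n)
    (fun x => by simpa using pow_prime_pow_mem_powSubgroup_iff hw hodd hw1 n 1 x)
    (fun _ => exists_pow_prime_pow_eq_of_mem hw hodd hw1)

/-- Let `p` be an odd prime and `G = ⟨σ⟩ ⋉ N`, `⟨σ⟩ ≅ ℤ_p`, `N = ℤ_p^I` abelian, with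
`σ` acting on `N` by multiplication by `1 + p^k`, `k ≥ 1` (each element of the
`ℤ_p`-factor acting by a scalar in `1 + p^kℤ_p`).  Then for every `n ≥ 1` the map
`x ↦ x^{p^n}` induces a group isomorphism `G/G^p ≅ G^{p^n}/G^{p^{n+1}}`. -/
theorem stmt17 (p k : ℕ) [Fact p.Prime] (hodd : Odd p) (hk : 1 ≤ k) (I : Type*)
    (φ : Multiplicative ℤ_[p] →* MulAut (Multiplicative (I → ℤ_[p])))
    (hφ1 : ∀ z, φ (Multiplicative.ofAdd 1) z =
        Multiplicative.ofAdd ((1 + (p : ℤ_[p]) ^ k) • Multiplicative.toAdd z))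
    (hφ : ∀ t : ℤ_[p], ∃ m : ℤ_[p], ∀ z, φ (Multiplicative.ofAdd t) z =
        Multiplicative.ofAdd ((1 + (p : ℤ_[p]) ^ k * m) • Multiplicative.toAdd z)) :
    ∀ n : ℕ, 1 ≤ n →
      ∃ e : (Multiplicative (I → ℤ_[p]) ⋊[φ] Multiplicative ℤ_[p]) ⧸
              powSubgroup (Multiplicative (I → ℤ_[p]) ⋊[φ] Multiplicative ℤ_[p]) p ≃*
            ↥(powSubgroup (Multiplicative (I → ℤ_[p]) ⋊[φ] Multiplicative ℤ_[p]) (p ^ n)) ⧸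
              (powSubgroup (Multiplicative (I → ℤ_[p]) ⋊[φ] Multiplicative ℤ_[p])
                  (p ^ (n + 1))).subgroupOf
                (powSubgroup (Multiplicative (I → ℤ_[p]) ⋊[φ] Multiplicative ℤ_[p]) (p ^ n)),
        ∀ x : Multiplicative (I → ℤ_[p]) ⋊[φ] Multiplicative ℤ_[p],
          e (QuotientGroup.mk x) =
            QuotientGroup.mk
              ⟨x ^ p ^ n,
                Subgroup.subset_normalClosure
                  (Set.mem_image_of_mem _ (Set.mem_univ x))⟩ :=
  stmt17_general p k hodd hk I φ hφ
end
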